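/- arXiv:1403.2542 — 6 statements merged into one kernel-verified Lean document; each statement's English description precedes it below -/
import Mathlib

section
/- Let φ : [1,∞) → (0,∞) be Borel measurable. Then φ belongs to the class RO if and only if there exist Borel measurable real-valued functions β and γ, both bounded on [1,∞), such that φ(t) = exp( β(t) + ∫₁ᵗ γ(τ)/τ dτ ) for every t ≥ 1. -/
open MeasureTheory

/-- A Borel measurable function `φ : [1,∞) → (0,∞)` belongs to the class RO
(is RO-varying at `+∞`). -/
def IsRO (φ : ℝ → ℝ) : Prop :=
  Measurable φ ∧ (∀ t ≥ (1 : ℝ), 0 < φ t) ∧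
    ∃ a > (1 : ℝ), ∃ c ≥ (1 : ℝ), ∀ t ≥ (1 : ℝ), ∀ l, 1 ≤ l → l ≤ a →
      c⁻¹ ≤ φ (l * t) / φ t ∧ φ (l * t) / φ t ≤ c

/-!
Write `ℓ = log φ`; then `φ ∈ RO` says `|ℓ (λ t) - ℓ t| ≤ L` for `t ≥ 1` and `λ ∈ [1, a]`.

Given such a bound, take `γ τ = (ℓ (a τ) - ℓ τ) / log a`, which is bounded by `L / log a`.
The substitution `s = a τ` turns `∫₁ᵗ γ τ / τ dτ` into `m t - m 1`, where
`m t = (log a)⁻¹ ∫ₜ^{a t} ℓ s / s ds` is the logarithmic mean of `ℓ` over `[t, a t]`; and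
`|ℓ t - m t| ≤ L`, so `β = ℓ - ∫₁ᵗ γ τ / τ dτ` is bounded. The integrals exist because
iterating the bound along the powers of `a` makes `ℓ` bounded on every `[1, aⁿ]`.

Conversely, `|∫ₜ^{λ t} γ τ / τ dτ| ≤ sup |γ| · log λ`, so the representation bounds the
increments of `ℓ` over `[t, λ t]`.
-/

open Set Real

theorem intervalIntegrable_of_abs_le {f : ℝ → ℝ} {u v C : ℝ} (hf : Measurable f)
    (hC : ∀ x ∈ uIcc u v, |f x| ≤ C) : IntervalIntegrable f volume u v := by
  refine (intervalIntegrable_const (c := C)).mono_fun' hf.aestronglyMeasurable.restrict ?_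
  filter_upwards [ae_restrict_mem measurableSet_uIoc] with x hx
  exact hC x (uIoc_subset_uIcc hx)

theorem abs_div_le_abs_of_one_le {x τ : ℝ} (hτ : 1 ≤ τ) : |x / τ| ≤ |x| := by
  rw [abs_div]
  exact div_le_self (abs_nonneg x) (hτ.trans (le_abs_self τ))

theorem intervalIntegrable_div_of_abs_le {γ : ℝ → ℝ} {M u v : ℝ} (hγ : Measurable γ)
    (hM : ∀ τ ≥ (1 : ℝ), |γ τ| ≤ M) (hu : 1 ≤ u) (hv : 1 ≤ v) :
    IntervalIntegrable (fun τ => γ τ / τ) volume u v :=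
  intervalIntegrable_of_abs_le (hγ.div measurable_id) fun τ hτ =>
    have h1τ : 1 ≤ τ := (le_min hu hv).trans hτ.1
    (abs_div_le_abs_of_one_le h1τ).trans (hM τ h1τ)

theorem abs_integral_div_le_mul_log {f : ℝ → ℝ} {t l M : ℝ} (ht : 0 < t) (hl : 1 ≤ l)
    (hf : ∀ τ ∈ Icc t (l * t), |f τ| ≤ M) :
    |∫ τ in t..l * t, f τ / τ| ≤ M * log l := by
  have hlt : t ≤ l * t := le_mul_of_one_le_left ht.le hl
  have hint : IntervalIntegrable (fun τ => M * τ⁻¹) volume t (l * t) := by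
    refine (intervalIntegral.intervalIntegrable_inv (fun τ hτ => ?_) continuousOn_id).const_mul M
    rw [uIcc_of_le hlt] at hτ
    exact (ht.trans_le hτ.1).ne'
  rw [← Real.norm_eq_abs]
  calc ‖∫ τ in t..l * t, f τ / τ‖ ≤ ∫ τ in t..l * t, M * τ⁻¹ := by
        refine intervalIntegral.norm_integral_le_of_norm_le hlt
          (Filter.Eventually.of_forall fun τ hτ => ?_) hint
        have hτ0 : 0 < τ := ht.trans hτ.1
        rw [Real.norm_eq_abs, abs_div, abs_of_pos hτ0, div_eq_mul_inv]
        exact mul_le_mul_of_nonneg_right (hf τ (Ioc_subset_Icc_self hτ)) (inv_nonneg.2 hτ0.le)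
    _ = M * log l := by
        rw [intervalIntegral.integral_const_mul, integral_inv_of_pos ht (by positivity),
          mul_div_cancel_right₀ _ ht.ne']

theorem integral_comp_mul_sub_div {f : ℝ → ℝ} {a t : ℝ}
    (hf : ∀ u v : ℝ, 1 ≤ u → 1 ≤ v → IntervalIntegrable (fun s => f s / s) volume u v)
    (ha : 1 ≤ a) (ht : 1 ≤ t) :
    ∫ τ in (1 : ℝ)..t, (f (a * τ) - f τ) / τ =
      (∫ s in t..a * t, f s / s) - ∫ s in (1 : ℝ)..a, f s / s := by
  have ha0 : a ≠ 0 := (zero_lt_one.trans_le ha).ne'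
  have hat : 1 ≤ a * t := one_le_mul_of_one_le_of_one_le ha ht
  have hdilate : IntervalIntegrable (fun τ => f (a * τ) / (a * τ)) volume 1 t := by
    have := (hf (a * 1) (a * t) (by simpa using ha) hat).comp_mul_left (c := a)
    rwa [mul_div_cancel_left₀ _ ha0, mul_div_cancel_left₀ _ ha0] at this
  have hsplit : (fun τ => (f (a * τ) - f τ) / τ) =
      fun τ => a * (f (a * τ) / (a * τ)) - f τ / τ := by
    ext τ
    rcases eq_or_ne τ 0 with rfl | hτ
    · simp
    · field_simp
  rw [hsplit, intervalIntegral.integral_sub (hdilate.const_mul a) (hf 1 t le_rfl ht),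
    intervalIntegral.integral_const_mul,
    intervalIntegral.integral_comp_mul_left (fun s => f s / s) ha0, smul_eq_mul,
    mul_inv_cancel_left₀ ha0, mul_one,
    intervalIntegral.integral_interval_sub_interval_comm (hf _ _ ha hat) (hf 1 t le_rfl ht)
      (hf a 1 ha le_rfl), intervalIntegral.integral_symm a 1,
    intervalIntegral.integral_symm (a * t) t]
  ring

def DilationIncrementsLE (ℓ : ℝ → ℝ) (a L : ℝ) : Prop :=
  ∀ t ≥ (1 : ℝ), ∀ l ∈ Icc 1 a, |ℓ (l * t) - ℓ t| ≤ L

theorem isRO_iff_dilationIncrementsLE_log {φ : ℝ → ℝ} (hmeas : Measurable φ)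
    (hpos : ∀ t ≥ (1 : ℝ), 0 < φ t) :
    IsRO φ ↔ ∃ a > (1 : ℝ), ∃ L, DilationIncrementsLE (fun t => log (φ t)) a L := by
  have hlog_ratio : ∀ t ≥ (1 : ℝ), ∀ l ≥ (1 : ℝ),
      log (φ (l * t)) - log (φ t) = log (φ (l * t) / φ t) := fun t ht l hl =>
    (log_div (hpos _ (one_le_mul_of_one_le_of_one_le hl ht)).ne' (hpos t ht).ne').symm
  have hratio_pos : ∀ t ≥ (1 : ℝ), ∀ l ≥ (1 : ℝ), 0 < φ (l * t) / φ t := fun t ht l hl =>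
    div_pos (hpos _ (one_le_mul_of_one_le_of_one_le hl ht)) (hpos t ht)
  constructor
  · rintro ⟨-, -, a, ha, c, hc1, hc⟩
    refine ⟨a, ha, log c, fun t ht l hl => ?_⟩
    obtain ⟨hlo, hhi⟩ := hc t ht l hl.1 hl.2
    have hr := hratio_pos t ht l hl.1
    rw [hlog_ratio t ht l hl.1, abs_le, ← log_inv]
    exact ⟨log_le_log (inv_pos.2 (by linarith)) hlo, log_le_log hr hhi⟩
  · rintro ⟨a, ha, L, hL⟩
    refine ⟨hmeas, hpos, a, ha, exp |L|, one_le_exp (abs_nonneg L), fun t ht l hl1 hla => ?_⟩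
    have hr := hratio_pos t ht l hl1
    have hbound := (hlog_ratio t ht l hl1 ▸ hL t ht l ⟨hl1, hla⟩).trans (le_abs_self L)
    rw [abs_le] at hbound
    rw [← exp_neg, ← exp_log hr]
    exact ⟨exp_le_exp.2 hbound.1, exp_le_exp.2 hbound.2⟩

theorem dilationIncrementsLE_of_eq_add_integral {ℓ β γ : ℝ → ℝ} {Mβ Mγ a : ℝ}
    (hγ : Measurable γ) (hβ : ∀ t ≥ (1 : ℝ), |β t| ≤ Mβ) (hγM : ∀ t ≥ (1 : ℝ), |γ t| ≤ Mγ)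
    (hrep : ∀ t ≥ (1 : ℝ), ℓ t = β t + ∫ τ in (1 : ℝ)..t, γ τ / τ) :
    DilationIncrementsLE ℓ a (2 * Mβ + Mγ * log a) := by
  intro t ht l hl
  have hlt : 1 ≤ l * t := one_le_mul_of_one_le_of_one_le hl.1 ht
  have hMγ : 0 ≤ Mγ := (abs_nonneg _).trans (hγM 1 le_rfl)
  have hincr : ℓ (l * t) - ℓ t = (β (l * t) - β t) + ∫ τ in t..l * t, γ τ / τ := by
    rw [hrep _ hlt, hrep t ht, ← intervalIntegral.integral_interval_sub_left
      (intervalIntegrable_div_of_abs_le hγ hγM le_rfl hlt)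
      (intervalIntegrable_div_of_abs_le hγ hγM le_rfl ht)]
    ring
  have hint : |∫ τ in t..l * t, γ τ / τ| ≤ Mγ * log a :=
    (abs_integral_div_le_mul_log (by linarith) hl.1 fun τ hτ =>
      hγM τ (ht.trans hτ.1)).trans
      (mul_le_mul_of_nonneg_left (log_le_log (by linarith [hl.1]) hl.2) hMγ)
  calc |ℓ (l * t) - ℓ t| ≤ (|β (l * t)| + |β t|) + |∫ τ in t..l * t, γ τ / τ| := by
        rw [hincr]
        exact (abs_add_le _ _).trans (add_le_add_left (abs_sub _ _) _)
    _ ≤ 2 * Mβ + Mγ * log a := by linarith [hβ _ hlt, hβ t ht]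

noncomputable def logScaleSlope (ℓ : ℝ → ℝ) (a : ℝ) : ℝ → ℝ :=
  (Ici 1).indicator fun τ => (ℓ (a * τ) - ℓ τ) / log a

theorem measurable_logScaleSlope {ℓ : ℝ → ℝ} (hℓ : Measurable ℓ) (a : ℝ) :
    Measurable (logScaleSlope ℓ a) :=
  (((hℓ.comp (measurable_const_mul a)).sub hℓ).div_const _).indicator measurableSet_Ici

namespace DilationIncrementsLE

variable {ℓ : ℝ → ℝ} {a L : ℝ}

theorem nonneg (h : DilationIncrementsLE ℓ a L) (ha : 1 ≤ a) : 0 ≤ L :=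
  (abs_nonneg _).trans (h 1 le_rfl 1 ⟨le_rfl, ha⟩)

theorem abs_le_of_mem_Icc_pow (h : DilationIncrementsLE ℓ a L) (ha : 1 ≤ a) (n : ℕ) :
    ∀ s ∈ Icc 1 (a ^ n), |ℓ s| ≤ |ℓ 1| + n * L := by
  induction n with
  | zero =>
    rintro s ⟨hs1, hs2⟩
    rw [le_antisymm (by simpa using hs2) hs1]
    simp
  | succ n ih =>
    rintro s ⟨hs1, hs2⟩
    have ha0 : 0 < a := zero_lt_one.trans_le ha
    set u := max 1 (s / a)
    have hu1 : 1 ≤ u := le_max_left _ _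
    have hu : u ∈ Icc 1 (a ^ n) := ⟨hu1, max_le (one_le_pow₀ ha)
      (by rw [div_le_iff₀ ha0, ← pow_succ]; exact hs2)⟩
    have hsu : s / u ∈ Icc 1 a := by
      refine ⟨(one_le_div (zero_lt_one.trans_le hu1)).2 (max_le hs1 ?_),
        (div_le_iff₀ (zero_lt_one.trans_le hu1)).2 ?_⟩
      · exact div_le_self (zero_le_one.trans hs1) ha
      · rw [mul_comm]; exact (div_le_iff₀ ha0).1 (le_max_right _ _)
    have hstep := h u hu1 (s / u) hsu
    rw [div_mul_cancel₀ _ (zero_lt_one.trans_le hu1).ne'] at hstep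
    calc |ℓ s| ≤ |ℓ s - ℓ u| + |ℓ u| := by linarith [abs_sub_abs_le_abs_sub (ℓ s) (ℓ u)]
      _ ≤ L + (|ℓ 1| + n * L) := add_le_add hstep (ih u hu)
      _ = |ℓ 1| + (n + 1 : ℕ) * L := by push_cast; ring

theorem intervalIntegrable_div (h : DilationIncrementsLE ℓ a L) (ha : 1 < a)
    (hℓ : Measurable ℓ) {u v : ℝ} (hu : 1 ≤ u) (hv : 1 ≤ v) :
    IntervalIntegrable (fun s => ℓ s / s) volume u v := by
  obtain ⟨n, hn⟩ := pow_unbounded_of_one_lt (max u v) ha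
  refine intervalIntegrable_of_abs_le (C := |ℓ 1| + n * L) (hℓ.div measurable_id) fun s hs => ?_
  have h1s : 1 ≤ s := (le_min hu hv).trans hs.1
  exact (abs_div_le_abs_of_one_le h1s).trans
    (h.abs_le_of_mem_Icc_pow ha.le n s ⟨h1s, hs.2.trans hn.le⟩)

theorem abs_mul_log_sub_integral_le (h : DilationIncrementsLE ℓ a L) (ha : 1 < a)
    (hℓ : Measurable ℓ) {t : ℝ} (ht : 1 ≤ t) :
    |ℓ t * log a - ∫ s in t..a * t, ℓ s / s| ≤ L * log a := by
  have ht0 : 0 < t := zero_lt_one.trans_le ht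
  have hat : 1 ≤ a * t := one_le_mul_of_one_le_of_one_le ha.le ht
  have hconst : ℓ t * log a = ∫ s in t..a * t, ℓ t / s := by
    simp_rw [div_eq_mul_inv]
    rw [intervalIntegral.integral_const_mul, integral_inv_of_pos ht0 (by positivity),
      mul_div_cancel_right₀ _ ht0.ne']
  have hinv : IntervalIntegrable (fun s => ℓ t / s) volume t (a * t) :=
    intervalIntegrable_div_of_abs_le measurable_const (fun _ _ => le_rfl) ht hat
  rw [hconst, ← intervalIntegral.integral_sub hinv (h.intervalIntegrable_div ha hℓ ht hat)]
  simp_rw [← sub_div]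
  refine abs_integral_div_le_mul_log ht0 ha.le fun s hs => ?_
  have hst : s / t ∈ Icc 1 a :=
    ⟨(one_le_div ht0).2 hs.1, (div_le_iff₀ ht0).2 hs.2⟩
  rw [abs_sub_comm, ← div_mul_cancel₀ s ht0.ne']
  exact h t ht (s / t) hst

theorem abs_logScaleSlope_le (h : DilationIncrementsLE ℓ a L) (ha : 1 < a) (τ : ℝ) :
    |logScaleSlope ℓ a τ| ≤ L / log a := by
  by_cases hτ : τ ∈ Ici (1 : ℝ)
  · rw [logScaleSlope, indicator_of_mem hτ, abs_div, abs_of_pos (log_pos ha)]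
    exact div_le_div_of_nonneg_right (h τ hτ a ⟨ha.le, le_rfl⟩) (log_pos ha).le
  · rw [logScaleSlope, indicator_of_notMem hτ, abs_zero]
    exact div_nonneg (h.nonneg ha.le) (log_pos ha).le

theorem intervalIntegrable_logScaleSlope_div (h : DilationIncrementsLE ℓ a L) (ha : 1 < a)
    (hℓ : Measurable ℓ) (u v : ℝ) :
    IntervalIntegrable (fun τ => logScaleSlope ℓ a τ / τ) volume u v := by
  refine intervalIntegrable_of_abs_le ((measurable_logScaleSlope hℓ a).div measurable_id)
    (C := L / log a) fun τ _ => ?_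
  have hdiv : |logScaleSlope ℓ a τ / τ| ≤ |logScaleSlope ℓ a τ| := by
    by_cases hτ : τ ∈ Ici (1 : ℝ)
    · exact abs_div_le_abs_of_one_le hτ
    · simp only [logScaleSlope, indicator_of_notMem hτ, zero_div, le_refl]
  exact hdiv.trans (h.abs_logScaleSlope_le ha τ)

theorem integral_logScaleSlope_div (h : DilationIncrementsLE ℓ a L) (ha : 1 < a)
    (hℓ : Measurable ℓ) {t : ℝ} (ht : 1 ≤ t) :
    ∫ τ in (1 : ℝ)..t, logScaleSlope ℓ a τ / τ =
      ((∫ s in t..a * t, ℓ s / s) - ∫ s in (1 : ℝ)..a, ℓ s / s) / log a := by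
  have hEq : EqOn (fun τ => logScaleSlope ℓ a τ / τ)
      (fun τ => (ℓ (a * τ) - ℓ τ) / τ / log a) (uIcc 1 t) := fun τ hτ => by
    rw [uIcc_of_le ht] at hτ
    simp only [logScaleSlope, indicator_of_mem (show τ ∈ Ici (1 : ℝ) from hτ.1)]
    ring
  rw [intervalIntegral.integral_congr hEq, intervalIntegral.integral_div,
    integral_comp_mul_sub_div (fun u v hu hv => h.intervalIntegrable_div ha hℓ hu hv) ha.le ht]

theorem exists_eq_add_integral (h : DilationIncrementsLE ℓ a L) (ha : 1 < a)
    (hℓ : Measurable ℓ) :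
    ∃ β γ : ℝ → ℝ, Measurable β ∧ Measurable γ ∧
      (∃ Mβ : ℝ, ∀ t ≥ (1 : ℝ), |β t| ≤ Mβ) ∧
      (∃ Mγ : ℝ, ∀ t ≥ (1 : ℝ), |γ t| ≤ Mγ) ∧
      ∀ t ≥ (1 : ℝ), ℓ t = β t + ∫ τ in (1 : ℝ)..t, γ τ / τ := by
  set I : ℝ → ℝ := fun t => ∫ τ in (1 : ℝ)..t, logScaleSlope ℓ a τ / τ
  have hI : Continuous I :=
    intervalIntegral.continuous_primitive (h.intervalIntegrable_logScaleSlope_div ha hℓ) 1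
  have hloga : 0 < log a := log_pos ha
  refine ⟨fun t => ℓ t - I t, logScaleSlope ℓ a, hℓ.sub hI.measurable,
    measurable_logScaleSlope hℓ a, ⟨L + |∫ s in (1 : ℝ)..a, ℓ s / s| / log a, fun t ht => ?_⟩,
    ⟨L / log a, fun τ _ => h.abs_logScaleSlope_le ha τ⟩, fun t _ => (sub_add_cancel _ _).symm⟩
  have hsplit : ℓ t - I t = (ℓ t * log a - ∫ s in t..a * t, ℓ s / s) / log a +
      (∫ s in (1 : ℝ)..a, ℓ s / s) / log a := by
    simp only [I, h.integral_logScaleSlope_div ha hℓ ht]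
    field_simp
    ring
  show |ℓ t - I t| ≤ _
  rw [hsplit]
  refine (abs_add_le _ _).trans ?_
  rw [abs_div, abs_div, abs_of_pos hloga]
  gcongr
  exact (div_le_iff₀ hloga).2 (h.abs_mul_log_sub_integral_le ha hℓ ht)

end DilationIncrementsLE

/-- `φ ∈ RO` if and only if `φ(t) = exp(β(t) + ∫₁ᵗ γ(τ)/τ dτ)` for `t ≥ 1`,
where `β` and `γ` are Borel measurable real-valued functions bounded on `[1,∞)`. -/
theorem statement1 (φ : ℝ → ℝ) (hmeas : Measurable φ) (hpos : ∀ t ≥ (1 : ℝ), 0 < φ t) :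
    IsRO φ ↔
      ∃ β γ : ℝ → ℝ, Measurable β ∧ Measurable γ ∧
        (∃ Mβ : ℝ, ∀ t ≥ (1 : ℝ), |β t| ≤ Mβ) ∧
        (∃ Mγ : ℝ, ∀ t ≥ (1 : ℝ), |γ t| ≤ Mγ) ∧
        ∀ t ≥ (1 : ℝ), φ t = Real.exp (β t + ∫ τ in (1 : ℝ)..t, γ τ / τ) := by
  rw [isRO_iff_dilationIncrementsLE_log hmeas hpos]
  constructor
  · rintro ⟨a, ha, L, hL⟩
    obtain ⟨β, γ, hβ, hγ, hMβ, hMγ, hrep⟩ :=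
      hL.exists_eq_add_integral ha (measurable_log.comp hmeas)
    exact ⟨β, γ, hβ, hγ, hMβ, hMγ, fun t ht => by rw [← hrep t ht, exp_log (hpos t ht)]⟩
  · rintro ⟨β, γ, -, hγ, ⟨Mβ, hMβ⟩, ⟨Mγ, hMγ⟩, hrep⟩
    exact ⟨2, one_lt_two, _, dilationIncrementsLE_of_eq_add_integral hγ hMβ hMγ
      fun t ht => by rw [hrep t ht, log_exp]⟩
end

section
/- Let φ belong to the class RO. Then the set S₀ := { s ∈ ℝ : ∃ c₀ > 0, ∀ t ≥ 1, ∀ λ ≥ 1, c₀ λ^{s} φ(t) ≤ φ(λt) } is nonempty and bounded above, the set S₁ := { s ∈ ℝ : ∃ c₁ > 0, ∀ t ≥ 1, ∀ λ ≥ 1, φ(λt) ≤ c₁ λ^{s} φ(t) } is nonempty and bounded below, and σ₀(φ) := sup S₀ and σ₁(φ) := inf S₁ satisfy −∞ < σ₀(φ) ≤ σ₁(φ) < ∞. -/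
/-- The set of lower power-bound exponents of `φ`. -/
def lowerExpSet (φ : ℝ → ℝ) : Set ℝ :=
  {s : ℝ | ∃ c₀ > (0 : ℝ), ∀ t ≥ (1 : ℝ), ∀ l ≥ (1 : ℝ), c₀ * l ^ s * φ t ≤ φ (l * t)}

/-- The set of upper power-bound exponents of `φ`. -/
def upperExpSet (φ : ℝ → ℝ) : Set ℝ :=
  {s : ℝ | ∃ c₁ > (0 : ℝ), ∀ t ≥ (1 : ℝ), ∀ l ≥ (1 : ℝ), φ (l * t) ≤ c₁ * l ^ s * φ t}

/-!
Iterating the defining inequality of RO gives `φ(λt) ≤ cⁿ φ(t)` for `1 ≤ λ ≤ aⁿ`, and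
taking `n ≈ log_a λ` turns `cⁿ` into `c · λ^σ` with `σ = log_a c`. Hence `σ` is an upper
exponent, and the same argument for `1/φ` makes `-σ` a lower one. Comparing a lower exponent
`s` with an upper one `s'` at `t = 1` bounds `λ^(s - s')` for all `λ ≥ 1`, which forces
`s ≤ s'`; so every lower exponent lies below every upper one, and `sup S₀ ≤ inf S₁`.
-/

open Set Real

section OneSidedBound

variable {φ : ℝ → ℝ} {a c : ℝ}

lemma le_pow_mul_of_le_mul_on_Icc (ha : 1 ≤ a) (hc : 1 ≤ c) (hφ : ∀ t ≥ (1 : ℝ), 0 ≤ φ t)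
    (h : ∀ t ≥ (1 : ℝ), ∀ l ∈ Icc 1 a, φ (l * t) ≤ c * φ t) (n : ℕ) :
    ∀ t ≥ (1 : ℝ), ∀ l ∈ Icc 1 (a ^ n), φ (l * t) ≤ c ^ n * φ t := by
  induction n with
  | zero =>
    intro t _ l hl
    rw [pow_zero, Icc_self, mem_singleton_iff] at hl
    simp [hl]
  | succ n ih =>
    intro t ht l ⟨hl1, hl⟩
    by_cases hla : l ≤ a
    · calc φ (l * t) ≤ c * φ t := h t ht l ⟨hl1, hla⟩
        _ ≤ c ^ (n + 1) * φ t :=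
          mul_le_mul_of_nonneg_right (le_self_pow₀ hc n.succ_ne_zero) (hφ t ht)
    · have ha0 : 0 < a := zero_lt_one.trans_le ha
      have hl'1 : 1 ≤ l / a := (one_le_div ha0).2 (not_le.1 hla).le
      have hl'n : l / a ≤ a ^ n := (div_le_iff₀ ha0).2 (by rwa [← pow_succ])
      have hl't : 1 ≤ l / a * t := one_le_mul_of_one_le_of_one_le hl'1 ht
      calc φ (l * t) = φ (a * (l / a * t)) := by rw [← mul_assoc, mul_div_cancel₀ _ ha0.ne']
        _ ≤ c * φ (l / a * t) := h _ hl't a ⟨ha, le_rfl⟩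
        _ ≤ c * (c ^ n * φ t) :=
          mul_le_mul_of_nonneg_left (ih t ht _ ⟨hl'1, hl'n⟩) (zero_le_one.trans hc)
        _ = c ^ (n + 1) * φ t := by ring

lemma logb_mem_upperExpSet (ha : 1 < a) (hc : 1 ≤ c) (hφ : ∀ t ≥ (1 : ℝ), 0 ≤ φ t)
    (h : ∀ t ≥ (1 : ℝ), ∀ l ∈ Icc 1 a, φ (l * t) ≤ c * φ t) :
    logb a c ∈ upperExpSet φ := by
  refine ⟨c, zero_lt_one.trans_le hc, fun t ht l hl => ?_⟩
  have ha0 : 0 < a := zero_lt_one.trans ha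
  have hlog : 0 ≤ logb a l := logb_nonneg ha hl
  set n := ⌊logb a l⌋₊
  have hn : a ^ n ≤ l := by
    calc a ^ n = a ^ (n : ℝ) := (rpow_natCast a n).symm
      _ ≤ a ^ logb a l := rpow_le_rpow_of_exponent_le ha.le (Nat.floor_le hlog)
      _ = l := rpow_logb ha0 ha.ne' (zero_lt_one.trans_le hl)
  have hn1 : l ≤ a ^ (n + 1) := by
    calc l = a ^ logb a l := (rpow_logb ha0 ha.ne' (zero_lt_one.trans_le hl)).symm
      _ ≤ a ^ ((n + 1 : ℕ) : ℝ) := by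
        refine rpow_le_rpow_of_exponent_le ha.le ?_
        push_cast
        exact (Nat.lt_floor_add_one _).le
      _ = a ^ (n + 1) := rpow_natCast a (n + 1)
  have hcn : c ^ n = (a ^ n) ^ logb a c := by
    rw [← rpow_pow_comm ha0.le, rpow_logb ha0 ha.ne' (zero_lt_one.trans_le hc)]
  calc φ (l * t) ≤ c ^ (n + 1) * φ t :=
        le_pow_mul_of_le_mul_on_Icc ha.le hc hφ h (n + 1) t ht l ⟨hl, hn1⟩
    _ = c * (a ^ n) ^ logb a c * φ t := by rw [pow_succ', hcn]
    _ ≤ c * l ^ logb a c * φ t := by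
        gcongr
        · exact hφ t ht
        · exact logb_nonneg ha hc

end OneSidedBound

lemma neg_mem_lowerExpSet_of_mem_upperExpSet_inv {φ : ℝ → ℝ} {s : ℝ}
    (hφ : ∀ t ≥ (1 : ℝ), 0 < φ t) (hs : s ∈ upperExpSet (fun t => (φ t)⁻¹)) :
    -s ∈ lowerExpSet φ := by
  obtain ⟨c, hc, h⟩ := hs
  refine ⟨c⁻¹, inv_pos.2 hc, fun t ht l hl => ?_⟩
  have hl0 : 0 < l := zero_lt_one.trans_le hl
  have hlt := hφ (l * t) (one_le_mul_of_one_le_of_one_le hl ht)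
  have key : (φ (l * t))⁻¹ ≤ c * l ^ s * (φ t)⁻¹ := h t ht l hl
  rw [← one_div, ← div_eq_mul_inv, div_le_div_iff₀ hlt (hφ t ht), one_mul] at key
  rwa [rpow_neg hl0.le, ← mul_inv, inv_mul_le_iff₀ (by positivity)]

lemma le_of_mem_lowerExpSet_of_mem_upperExpSet {φ : ℝ → ℝ} {s s' : ℝ} (hφ : 0 < φ 1)
    (hs : s ∈ lowerExpSet φ) (hs' : s' ∈ upperExpSet φ) : s ≤ s' := by
  obtain ⟨c₀, hc₀, h₀⟩ := hs
  obtain ⟨c₁, hc₁, h₁⟩ := hs'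
  by_contra! hlt
  have hbdd : ∀ l ≥ (1 : ℝ), l ^ (s - s') ≤ c₁ / c₀ := fun l hl => by
    have hl0 : 0 < l := zero_lt_one.trans_le hl
    have h := (h₀ 1 le_rfl l hl).trans (h₁ 1 le_rfl l hl)
    rw [le_div_iff₀ hc₀, rpow_sub hl0, div_mul_eq_mul_div, div_le_iff₀ (rpow_pos_of_pos hl0 _)]
    nlinarith
  obtain ⟨l, hl, hl1⟩ :=
    (((tendsto_rpow_atTop (sub_pos.2 hlt)).eventually_gt_atTop (c₁ / c₀)).and
      (Filter.eventually_ge_atTop 1)).exists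
  exact (hbdd l hl1).not_gt hl

lemma IsRO.exists_neg_mem_lowerExpSet_and_mem_upperExpSet {φ : ℝ → ℝ} (hφ : IsRO φ) :
    ∃ σ, -σ ∈ lowerExpSet φ ∧ σ ∈ upperExpSet φ := by
  obtain ⟨-, hpos, a, ha, c, hc, h⟩ := hφ
  refine ⟨logb a c, neg_mem_lowerExpSet_of_mem_upperExpSet_inv hpos ?_, ?_⟩ <;>
    refine logb_mem_upperExpSet ha hc (fun t ht => by have := hpos t ht; positivity)
      fun t ht l ⟨hl1, hla⟩ => ?_
  · have hlt := hpos (l * t) (one_le_mul_of_one_le_of_one_le hl1 ht)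
    rw [← one_div, ← div_eq_mul_inv, div_le_div_iff₀ hlt (hpos t ht), one_mul]
    exact (inv_mul_le_iff₀ (zero_lt_one.trans_le hc)).1
      ((le_div_iff₀ (hpos t ht)).1 (h t ht l hl1 hla).1)
  · exact (div_le_iff₀ (hpos t ht)).1 (h t ht l hl1 hla).2

/-- For `φ ∈ RO`, the set `S₀` of lower exponents is nonempty and bounded
above, the set `S₁` of upper exponents is nonempty and bounded below, and the Matuszewska
indices `σ₀(φ) := sup S₀` and `σ₁(φ) := inf S₁` satisfy `−∞ < σ₀(φ) ≤ σ₁(φ) < ∞`. -/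
theorem statement2 (φ : ℝ → ℝ) (hφ : IsRO φ) :
    (lowerExpSet φ).Nonempty ∧ BddAbove (lowerExpSet φ) ∧
    (upperExpSet φ).Nonempty ∧ BddBelow (upperExpSet φ) ∧
    sSup (lowerExpSet φ) ≤ sInf (upperExpSet φ) := by
  obtain ⟨σ, hlow, hup⟩ := hφ.exists_neg_mem_lowerExpSet_and_mem_upperExpSet
  have key : ∀ s ∈ lowerExpSet φ, ∀ s' ∈ upperExpSet φ, s ≤ s' := fun _ hs _ hs' =>
    le_of_mem_lowerExpSet_of_mem_upperExpSet (hφ.2.1 1 le_rfl) hs hs'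
  exact ⟨⟨_, hlow⟩, ⟨σ, fun s hs => key s hs σ hup⟩, ⟨_, hup⟩,
    ⟨-σ, fun s hs => key (-σ) hlow s hs⟩,
    csSup_le ⟨_, hlow⟩ fun s hs => le_csInf ⟨_, hup⟩ fun s' hs' => key s hs s' hs'⟩
end

section
/- Let α belong to the class RO and suppose σ₀(α) > 0. Then there exists a number c₂ ≥ 1 such that c₂⁻¹ α(t₁ + t₂) ≤ α(t₁) + α(t₂) ≤ c₂ α(t₁ + t₂) for all t₁, t₂ ≥ 1. -/
/-- The lower Matuszewska index `σ₀(φ)`. -/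
noncomputable def sigma0 (φ : ℝ → ℝ) : ℝ :=
  sSup {s : ℝ | ∃ c₀ > (0 : ℝ), ∀ t ≥ (1 : ℝ), ∀ l ≥ (1 : ℝ), c₀ * l ^ s * φ t ≤ φ (l * t)}

/-- The upper Matuszewska index `σ₁(φ)`. -/
noncomputable def sigma1 (φ : ℝ → ℝ) : ℝ :=
  sInf {s : ℝ | ∃ c₁ > (0 : ℝ), ∀ t ≥ (1 : ℝ), ∀ l ≥ (1 : ℝ), φ (l * t) ≤ c₁ * l ^ s * φ t}

/-!
The lower estimate comes from the RO property: iterating the defining bound gives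
`α(λt) ≤ C α(t)` for `λ ∈ [1, 2]`, and `t₁ + t₂ = λ · max t₁ t₂` with such a `λ`.
The upper estimate comes from `σ₀(α) > 0`: an exponent `s > 0` with `c₀ λ^s α(t) ≤ α(λt)`
makes `α` almost increasing, `c₀ α(tᵢ) ≤ α(t₁ + t₂)`.
-/

section

variable {φ : ℝ → ℝ}

theorem apply_mul_le_pow_mul {a c : ℝ} (hpos : ∀ t ≥ (1 : ℝ), 0 ≤ φ t) (ha : 1 ≤ a)
    (hc : 0 ≤ c) (hstep : ∀ t ≥ (1 : ℝ), ∀ l, 1 ≤ l → l ≤ a → φ (l * t) ≤ c * φ t) :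
    ∀ k : ℕ, ∀ t ≥ (1 : ℝ), ∀ l, 1 ≤ l → l ≤ a ^ k → φ (l * t) ≤ c ^ k * φ t
  | 0, t, _, l, hl, hlk => by
    rw [le_antisymm (by simpa using hlk) hl, one_mul, pow_zero, one_mul]
  | k + 1, t, ht, l, hl, hlk => by
    -- split `l = l₁ * l₂` with `l₂ = min l aᵏ ∈ [1, aᵏ]` and `l₁ ∈ [1, a]`
    set l₂ := min l (a ^ k)
    have hl₂ : 1 ≤ l₂ := le_min hl (one_le_pow₀ ha)
    have hl₂pos : 0 < l₂ := one_pos.trans_le hl₂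
    have hl₁ : 1 ≤ l / l₂ := (one_le_div hl₂pos).mpr (min_le_left _ _)
    have hl₁a : l / l₂ ≤ a := by
      rw [div_le_iff₀ hl₂pos]
      refine (le_min (le_mul_of_one_le_left (zero_le_one.trans hl) ha) ?_).trans_eq
        (mul_min_of_nonneg _ _ (zero_le_one.trans ha)).symm
      rwa [← pow_succ']
    have hl₂t : 1 ≤ l₂ * t := one_le_mul_of_one_le_of_one_le hl₂ ht
    calc φ (l * t) = φ (l / l₂ * (l₂ * t)) := by
          rw [← mul_assoc, div_mul_cancel₀ _ hl₂pos.ne']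
      _ ≤ c * φ (l₂ * t) := hstep _ hl₂t _ hl₁ hl₁a
      _ ≤ c * (c ^ k * φ t) :=
          mul_le_mul_of_nonneg_left
            (apply_mul_le_pow_mul hpos ha hc hstep k t ht l₂ hl₂ (min_le_right _ _)) hc
      _ = c ^ (k + 1) * φ t := by ring

theorem IsRO.exists_apply_mul_le (hφ : IsRO φ) (b : ℝ) :
    ∃ C ≥ (1 : ℝ), ∀ t ≥ (1 : ℝ), ∀ l, 1 ≤ l → l ≤ b → φ (l * t) ≤ C * φ t := by
  obtain ⟨-, hpos, a, ha, c, hc, hratio⟩ := hφ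
  have hstep : ∀ t ≥ (1 : ℝ), ∀ l, 1 ≤ l → l ≤ a → φ (l * t) ≤ c * φ t :=
    fun t ht l hl hla => (div_le_iff₀ (hpos t ht)).mp (hratio t ht l hl hla).2
  obtain ⟨n, hn⟩ := pow_unbounded_of_one_lt b ha
  refine ⟨c ^ n, one_le_pow₀ hc, fun t ht l hl hlb => ?_⟩
  exact apply_mul_le_pow_mul (fun t ht => (hpos t ht).le) ha.le (zero_le_one.trans hc)
    hstep n t ht l hl (hlb.trans hn.le)

theorem IsRO.exists_apply_add_le (hφ : IsRO φ) :
    ∃ C ≥ (1 : ℝ), ∀ t₁ ≥ (1 : ℝ), ∀ t₂ ≥ (1 : ℝ), φ (t₁ + t₂) ≤ C * (φ t₁ + φ t₂) := by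
  obtain ⟨C, hC, hbound⟩ := hφ.exists_apply_mul_le 2
  have hpos : ∀ t ≥ (1 : ℝ), 0 < φ t := hφ.2.1
  have hle_of_le : ∀ t₁ ≥ (1 : ℝ), ∀ t₂ ≥ (1 : ℝ), t₂ ≤ t₁ →
      φ (t₁ + t₂) ≤ C * (φ t₁ + φ t₂) := by
    intro t₁ ht₁ t₂ ht₂ h
    have ht₁pos : 0 < t₁ := one_pos.trans_le ht₁
    have hl : 1 ≤ (t₁ + t₂) / t₁ := by rw [le_div_iff₀ ht₁pos]; linarith
    have hl2 : (t₁ + t₂) / t₁ ≤ 2 := by rw [div_le_iff₀ ht₁pos]; linarith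
    calc φ (t₁ + t₂) = φ ((t₁ + t₂) / t₁ * t₁) := by rw [div_mul_cancel₀ _ ht₁pos.ne']
      _ ≤ C * φ t₁ := hbound t₁ ht₁ _ hl hl2
      _ ≤ C * (φ t₁ + φ t₂) := by
          gcongr
          exact le_add_of_nonneg_right (hpos t₂ ht₂).le
  refine ⟨C, hC, fun t₁ ht₁ t₂ ht₂ => ?_⟩
  rcases le_total t₂ t₁ with h | h
  · exact hle_of_le t₁ ht₁ t₂ ht₂ h
  · simpa only [add_comm] using hle_of_le t₂ ht₂ t₁ ht₁ h

theorem exists_rpow_mul_le_of_sigma0_pos (h0 : 0 < sigma0 φ) :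
    ∃ s > (0 : ℝ), ∃ c₀ > (0 : ℝ), ∀ t ≥ (1 : ℝ), ∀ l ≥ (1 : ℝ),
      c₀ * l ^ s * φ t ≤ φ (l * t) := by
  -- `sSup ∅ = 0`, so the defining set of `σ₀` is nonempty
  have hne : {s : ℝ | ∃ c₀ > (0 : ℝ), ∀ t ≥ (1 : ℝ), ∀ l ≥ (1 : ℝ),
      c₀ * l ^ s * φ t ≤ φ (l * t)}.Nonempty := by
    rw [Set.nonempty_iff_ne_empty]
    intro h
    rw [sigma0, h, Real.sSup_empty] at h0
    exact h0.false
  obtain ⟨s, hs, hs0⟩ := exists_lt_of_lt_csSup hne h0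
  exact ⟨s, hs0, hs⟩

theorem mul_apply_le_of_rpow_mul_le {s c₀ : ℝ} (hpos : ∀ t ≥ (1 : ℝ), 0 ≤ φ t) (hs : 0 ≤ s)
    (hc₀ : 0 < c₀) (hlow : ∀ t ≥ (1 : ℝ), ∀ l ≥ (1 : ℝ), c₀ * l ^ s * φ t ≤ φ (l * t))
    {t t' : ℝ} (ht : 1 ≤ t) (htt' : t ≤ t') : c₀ * φ t ≤ φ t' := by
  have htpos : 0 < t := one_pos.trans_le ht
  have hl : 1 ≤ t' / t := (one_le_div htpos).mpr htt'
  calc c₀ * φ t = c₀ * 1 * φ t := by rw [mul_one]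
    _ ≤ c₀ * (t' / t) ^ s * φ t := by
        gcongr
        · exact hpos t ht
        · exact Real.one_le_rpow hl hs
    _ ≤ φ (t' / t * t) := hlow t ht _ hl
    _ = φ t' := by rw [div_mul_cancel₀ _ htpos.ne']

theorem exists_add_le_mul_apply_add_of_sigma0_pos (hpos : ∀ t ≥ (1 : ℝ), 0 ≤ φ t)
    (h0 : 0 < sigma0 φ) :
    ∃ C > (0 : ℝ), ∀ t₁ ≥ (1 : ℝ), ∀ t₂ ≥ (1 : ℝ), φ t₁ + φ t₂ ≤ C * φ (t₁ + t₂) := by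
  obtain ⟨s, hs, c₀, hc₀, hlow⟩ := exists_rpow_mul_le_of_sigma0_pos h0
  refine ⟨2 / c₀, by positivity, fun t₁ ht₁ t₂ ht₂ => ?_⟩
  have h₁ : c₀ * φ t₁ ≤ φ (t₁ + t₂) :=
    mul_apply_le_of_rpow_mul_le hpos hs.le hc₀ hlow ht₁ (by linarith)
  have h₂ : c₀ * φ t₂ ≤ φ (t₁ + t₂) :=
    mul_apply_le_of_rpow_mul_le hpos hs.le hc₀ hlow ht₂ (by linarith)
  rw [div_mul_eq_mul_div, le_div_iff₀ hc₀]
  linarith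

end

/-- If `α ∈ RO` and `σ₀(α) > 0`, then there is `c₂ ≥ 1` such that
`c₂⁻¹ α(t₁+t₂) ≤ α(t₁) + α(t₂) ≤ c₂ α(t₁+t₂)` for all `t₁, t₂ ≥ 1`. -/
theorem statement8 (α : ℝ → ℝ) (hα : IsRO α) (h0 : 0 < sigma0 α) :
    ∃ c₂ ≥ (1 : ℝ), ∀ t₁ ≥ (1 : ℝ), ∀ t₂ ≥ (1 : ℝ),
      c₂⁻¹ * α (t₁ + t₂) ≤ α t₁ + α t₂ ∧ α t₁ + α t₂ ≤ c₂ * α (t₁ + t₂) := by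
  have hpos : ∀ t ≥ (1 : ℝ), 0 < α t := hα.2.1
  obtain ⟨C₁, hC₁, hlower⟩ := hα.exists_apply_add_le
  obtain ⟨C₂, -, hupper⟩ :=
    exists_add_le_mul_apply_add_of_sigma0_pos (fun t ht => (hpos t ht).le) h0
  refine ⟨max C₁ C₂, hC₁.trans (le_max_left _ _), fun t₁ ht₁ t₂ ht₂ => ⟨?_, ?_⟩⟩
  · rw [inv_mul_le_iff₀ (one_pos.trans_le (hC₁.trans (le_max_left _ _)))]
    calc α (t₁ + t₂) ≤ C₁ * (α t₁ + α t₂) := hlower t₁ ht₁ t₂ ht₂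
      _ ≤ max C₁ C₂ * (α t₁ + α t₂) := by
          gcongr
          · exact add_nonneg (hpos t₁ ht₁).le (hpos t₂ ht₂).le
          · exact le_max_left _ _
  · calc α t₁ + α t₂ ≤ C₂ * α (t₁ + t₂) := hupper t₁ ht₁ t₂ ht₂
      _ ≤ max C₁ C₂ * α (t₁ + t₂) := by
          gcongr
          · exact (hpos _ (by linarith)).le
          · exact le_max_right _ _
end

section
/- Let n ≥ 1 and let α belong to the class RO with σ₀(α) > 0. Then there exists a number c₁ ≥ 1, independent of the parameter p, such that for every p ≥ 1 and every measurable function g : ℝⁿ → ℂ the following inequalities hold (as inequalities of Lebesgue integrals with values in [0,∞]): c₁⁻² ∫_{ℝⁿ} α(⟨ξ⟩ + p)² |g(ξ)|² dξ ≤ ∫_{ℝⁿ} ( α(⟨ξ⟩)² + α(p)² ) |g(ξ)|² dξ ≤ c₁² ∫_{ℝⁿ} α(⟨ξ⟩ + p)² |g(ξ)|² dξ. (On the Fourier side this expresses the uniform equivalence, with respect to p ≥ 1, of the parameter-dependent norms ‖w‖_{α,p,ℝⁿ} = (‖w‖²_{H^{α}(ℝⁿ)} + α(p)²‖w‖²_{L²(ℝⁿ)})^{1/2}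 and ‖w‖'_{α,p,ℝⁿ} = (∫ α(⟨ξ⟩+p)²|ŵ(ξ)|²dξ)^{1/2} on H^{α}(ℝⁿ).) -/
open MeasureTheory

/-- The smoothed modulus `⟨ξ⟩ := (1 + |ξ|²)^{1/2}` of `ξ ∈ ℝⁿ`. -/
noncomputable def smoothedModulus {n : ℕ} (ξ : EuclideanSpace ℝ (Fin n)) : ℝ :=
  Real.sqrt (1 + ‖ξ‖ ^ 2)

/-!
For `t, p ≥ 1` we compare `α(t + p)²` with `α(t)² + α(p)²` pointwise, with constants independent
of `t` and `p`. From above: `t + p = l · max t p` with `l ∈ [1, 2]`, and iterating the RO bound on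
dilations by factors in `[1, a]` bounds `α` on dilations by factors in `[1, 2]`. From below: a
positive lower Matuszewska index makes `α` almost increasing, so `α(t), α(p) ≲ α(t + p)`.
Integrating against `|g|²` with `t = ⟨ξ⟩ ≥ 1` gives both inequalities.
-/

open Set

lemma le_pow_mul_of_le_mul {φ : ℝ → ℝ} {a c : ℝ} (ha : 1 ≤ a) (hc : 1 ≤ c)
    (hφ : ∀ t ≥ (1 : ℝ), 0 ≤ φ t) (h : ∀ t ≥ (1 : ℝ), ∀ l ∈ Icc 1 a, φ (l * t) ≤ c * φ t)
    (k : ℕ) : ∀ t ≥ (1 : ℝ), ∀ l ∈ Icc 1 (a ^ k), φ (l * t) ≤ c ^ k * φ t := by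
  induction k with
  | zero =>
    rintro t - l ⟨hl1, hl2⟩
    rw [pow_zero] at hl2
    simp [le_antisymm hl2 hl1]
  | succ k ih =>
    rintro t ht l ⟨hl1, hl2⟩
    rcases le_or_gt l a with hla | hal
    · calc φ (l * t) ≤ c * φ t := h t ht l ⟨hl1, hla⟩
        _ ≤ c ^ (k + 1) * φ t := by
          gcongr
          · exact hφ t ht
          · exact le_self_pow₀ hc (by omega)
    · have ha0 : 0 < a := by linarith
      have hl' : l / a ∈ Icc 1 (a ^ k) :=
        ⟨(one_le_div ha0).2 hal.le, (div_le_iff₀ ha0).2 (by rwa [← pow_succ])⟩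
      have ht' : 1 ≤ l / a * t := one_le_mul_of_one_le_of_one_le hl'.1 ht
      calc φ (l * t) = φ (a * (l / a * t)) := by rw [← mul_assoc, mul_div_cancel₀ _ ha0.ne']
        _ ≤ c * φ (l / a * t) := h _ ht' a ⟨ha, le_rfl⟩
        _ ≤ c * (c ^ k * φ t) := by gcongr; exact ih t ht _ hl'
        _ = c ^ (k + 1) * φ t := by ring

namespace IsRO

variable {φ : ℝ → ℝ}

lemma nonneg (hφ : IsRO φ) : ∀ t ≥ (1 : ℝ), 0 ≤ φ t :=
  fun t ht => (hφ.2.1 t ht).le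

lemma exists_le_mul (hφ : IsRO φ) (b : ℝ) :
    ∃ C ≥ (1 : ℝ), ∀ t ≥ (1 : ℝ), ∀ l ∈ Icc 1 b, φ (l * t) ≤ C * φ t := by
  obtain ⟨-, hpos, a, ha, c, hc, hbd⟩ := hφ
  obtain ⟨k, hk⟩ := pow_unbounded_of_one_lt b ha
  have hstep : ∀ t ≥ (1 : ℝ), ∀ l ∈ Icc 1 a, φ (l * t) ≤ c * φ t := fun t ht l hl =>
    (div_le_iff₀ (hpos t ht)).1 (hbd t ht l hl.1 hl.2).2
  exact ⟨c ^ k, one_le_pow₀ hc, fun t ht l hl =>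
    le_pow_mul_of_le_mul ha.le hc (fun t ht => (hpos t ht).le) hstep k t ht l
      ⟨hl.1, hl.2.trans hk.le⟩⟩

lemma exists_add_le_mul_max (hφ : IsRO φ) :
    ∃ C ≥ (1 : ℝ), ∀ t ≥ (1 : ℝ), ∀ p ≥ (1 : ℝ), φ (t + p) ≤ C * max (φ t) (φ p) := by
  obtain ⟨C, hC, h⟩ := hφ.exists_le_mul 2
  refine ⟨C, hC, fun t ht p hp => ?_⟩
  have hm : 1 ≤ max t p := ht.trans (le_max_left t p)
  have hm0 : 0 < max t p := by linarith
  have hl : (t + p) / max t p ∈ Icc 1 2 :=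
    ⟨(one_le_div hm0).2 (max_le (by linarith) (by linarith)),
      (div_le_iff₀ hm0).2 (by linarith [le_max_left t p, le_max_right t p])⟩
  calc φ (t + p) = φ ((t + p) / max t p * max t p) := by rw [div_mul_cancel₀ _ hm0.ne']
    _ ≤ C * φ (max t p) := h _ hm _ hl
    _ ≤ C * max (φ t) (φ p) := by
      gcongr
      rcases max_choice t p with e | e <;> rw [e]
      exacts [le_max_left _ _, le_max_right _ _]

end IsRO

lemma exists_le_mul_of_le_of_sigma0_pos {φ : ℝ → ℝ} (hφ : ∀ t ≥ (1 : ℝ), 0 ≤ φ t)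
    (h0 : 0 < sigma0 φ) : ∃ K > (0 : ℝ), ∀ u ≥ (1 : ℝ), ∀ v ≥ u, φ u ≤ K * φ v := by
  have hne : {s : ℝ | ∃ c₀ > (0 : ℝ), ∀ t ≥ (1 : ℝ), ∀ l ≥ (1 : ℝ),
      c₀ * l ^ s * φ t ≤ φ (l * t)}.Nonempty := by
    by_contra hempty
    rw [not_nonempty_iff_eq_empty] at hempty
    simp [sigma0, hempty] at h0
  obtain ⟨s, ⟨c₀, hc₀, hs⟩, hs0⟩ := exists_lt_of_lt_csSup hne h0
  refine ⟨c₀⁻¹, inv_pos.2 hc₀, fun u hu v huv => ?_⟩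
  have hu0 : 0 < u := by linarith
  have hl : 1 ≤ v / u := (one_le_div hu0).2 huv
  have hlow := hs u hu (v / u) hl
  rw [div_mul_cancel₀ _ hu0.ne'] at hlow
  rw [le_inv_mul_iff₀ hc₀]
  calc c₀ * φ u = c₀ * 1 * φ u := by ring
    _ ≤ c₀ * (v / u) ^ s * φ u := by
      gcongr
      · exact hφ u hu
      · exact Real.one_le_rpow hl hs0.le
    _ ≤ φ v := hlow

lemma max_sq_le_sq_add_sq (x y : ℝ) : max x y ^ 2 ≤ x ^ 2 + y ^ 2 := by
  rcases max_choice x y with e | e <;> rw [e] <;> nlinarith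

lemma IsRO.exists_add_sq_comparable {φ : ℝ → ℝ} (hφ : IsRO φ) (h0 : 0 < sigma0 φ) :
    ∃ M ≥ (1 : ℝ), ∀ t ≥ (1 : ℝ), ∀ p ≥ (1 : ℝ),
      φ (t + p) ^ 2 ≤ M * (φ t ^ 2 + φ p ^ 2) ∧ φ t ^ 2 + φ p ^ 2 ≤ M * φ (t + p) ^ 2 := by
  obtain ⟨C, hC, hup⟩ := hφ.exists_add_le_mul_max
  obtain ⟨K, -, hlow⟩ := exists_le_mul_of_le_of_sigma0_pos hφ.nonneg h0
  refine ⟨C ^ 2 + 2 * K ^ 2, by nlinarith, fun t ht p hp => ⟨?_, ?_⟩⟩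
  · calc φ (t + p) ^ 2 ≤ (C * max (φ t) (φ p)) ^ 2 :=
          pow_le_pow_left₀ (hφ.nonneg _ (by linarith)) (hup t ht p hp) 2
      _ = C ^ 2 * max (φ t) (φ p) ^ 2 := mul_pow _ _ _
      _ ≤ C ^ 2 * (φ t ^ 2 + φ p ^ 2) := by gcongr; exact max_sq_le_sq_add_sq _ _
      _ ≤ (C ^ 2 + 2 * K ^ 2) * (φ t ^ 2 + φ p ^ 2) := by gcongr; nlinarith
  · have hpt := hlow t ht (t + p) (by linarith)
    have hpp := hlow p hp (t + p) (by linarith)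
    calc φ t ^ 2 + φ p ^ 2 ≤ (K * φ (t + p)) ^ 2 + (K * φ (t + p)) ^ 2 := by
          gcongr
          · exact hφ.nonneg t ht
          · exact hφ.nonneg p hp
      _ = 2 * K ^ 2 * φ (t + p) ^ 2 := by ring
      _ ≤ (C ^ 2 + 2 * K ^ 2) * φ (t + p) ^ 2 := by gcongr; nlinarith

lemma MeasureTheory.lintegral_ofReal_mul_le_mul {X : Type*} [MeasurableSpace X] {μ : Measure X}
    {f g w : X → ℝ} {M : ℝ} (hM : 0 ≤ M) (hw : ∀ x, 0 ≤ w x) (hfg : ∀ x, f x ≤ M * g x) :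
    ∫⁻ x, ENNReal.ofReal (f x * w x) ∂μ ≤
      ENNReal.ofReal M * ∫⁻ x, ENNReal.ofReal (g x * w x) ∂μ := by
  rw [← lintegral_const_mul' _ _ ENNReal.ofReal_ne_top]
  refine lintegral_mono fun x => ?_
  rw [← ENNReal.ofReal_mul hM, ← mul_assoc]
  exact ENNReal.ofReal_le_ofReal (mul_le_mul_of_nonneg_right (hfg x) (hw x))

lemma one_le_smoothedModulus {n : ℕ} (ξ : EuclideanSpace ℝ (Fin n)) : 1 ≤ smoothedModulus ξ :=
  Real.one_le_sqrt.2 (le_add_of_nonneg_right (sq_nonneg _))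

theorem statement10_general (n : ℕ) (α : ℝ → ℝ) (hα : IsRO α) (h0 : 0 < sigma0 α) :
    ∃ c₁ ≥ (1 : ℝ), ∀ p ≥ (1 : ℝ), ∀ g : EuclideanSpace ℝ (Fin n) → ℂ, Measurable g →
      ((ENNReal.ofReal (c₁ ^ 2))⁻¹ *
          ∫⁻ ξ, ENNReal.ofReal (α (smoothedModulus ξ + p) ^ 2 * ‖g ξ‖ ^ 2) ≤
        ∫⁻ ξ, ENNReal.ofReal ((α (smoothedModulus ξ) ^ 2 + α p ^ 2) * ‖g ξ‖ ^ 2)) ∧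
      (∫⁻ ξ, ENNReal.ofReal ((α (smoothedModulus ξ) ^ 2 + α p ^ 2) * ‖g ξ‖ ^ 2) ≤
        ENNReal.ofReal (c₁ ^ 2) *
          ∫⁻ ξ, ENNReal.ofReal (α (smoothedModulus ξ + p) ^ 2 * ‖g ξ‖ ^ 2)) := by
  obtain ⟨M, hM, hcomp⟩ := hα.exists_add_sq_comparable h0
  have hM0 : 0 ≤ M := by linarith
  refine ⟨√M, Real.one_le_sqrt.2 hM, fun p hp g _ => ?_⟩
  rw [Real.sq_sqrt hM0]
  have hM' : ENNReal.ofReal M ≠ 0 := (ENNReal.ofReal_pos.2 (by linarith)).ne'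
  refine ⟨(ENNReal.inv_mul_le_iff hM' ENNReal.ofReal_ne_top).2 ?_, ?_⟩ <;>
    refine lintegral_ofReal_mul_le_mul hM0 (fun ξ => by positivity) fun ξ => ?_
  · exact (hcomp _ (one_le_smoothedModulus ξ) p hp).1
  · exact (hcomp _ (one_le_smoothedModulus ξ) p hp).2

/-- If `α ∈ RO` with `σ₀(α) > 0`, then there is `c₁ ≥ 1`, independent of
`p`, such that for every `p ≥ 1` and every measurable `g : ℝⁿ → ℂ`,
`c₁⁻² ∫ α(⟨ξ⟩+p)²|g(ξ)|² dξ ≤ ∫ (α(⟨ξ⟩)² + α(p)²)|g(ξ)|² dξ ≤ c₁² ∫ α(⟨ξ⟩+p)²|g(ξ)|² dξ`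
(uniform equivalence of the parameter-dependent norms `‖·‖_{α,p}` and `‖·‖'_{α,p}`). -/
theorem statement10 (n : ℕ) (hn : 1 ≤ n) (α : ℝ → ℝ) (hα : IsRO α) (h0 : 0 < sigma0 α) :
    ∃ c₁ ≥ (1 : ℝ), ∀ p ≥ (1 : ℝ), ∀ g : EuclideanSpace ℝ (Fin n) → ℂ, Measurable g →
      ((ENNReal.ofReal (c₁ ^ 2))⁻¹ *
          ∫⁻ ξ, ENNReal.ofReal (α (smoothedModulus ξ + p) ^ 2 * ‖g ξ‖ ^ 2) ≤
        ∫⁻ ξ, ENNReal.ofReal ((α (smoothedModulus ξ) ^ 2 + α p ^ 2) * ‖g ξ‖ ^ 2)) ∧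
      (∫⁻ ξ, ENNReal.ofReal ((α (smoothedModulus ξ) ^ 2 + α p ^ 2) * ‖g ξ‖ ^ 2) ≤
        ENNReal.ofReal (c₁ ^ 2) *
          ∫⁻ ξ, ENNReal.ofReal (α (smoothedModulus ξ + p) ^ 2 * ‖g ξ‖ ^ 2)) :=
  statement10_general n α hα h0
end

section
/- Let α belong to the class RO and let real numbers s₀ and s₁ satisfy s₀ < σ₀(α) and s₁ > σ₁(α). Define ψ : (0,∞) → (0,∞) by ψ(t) := t^{−s₀/(s₁−s₀)} α( t^{1/(s₁−s₀)} ) for t ≥ 1 and ψ(t) := α(1) for 0 < t < 1. Then: (a) ψ is bounded on every compact interval [a,b] with 0 < a < b < ∞, and 1/ψ is bounded on every set [r,∞) with r > 0 (i.e., ψ belongs to the class ℬ); and (b) ψ is pseudoconcave on a neighborhood of +∞, i.e., there exist a number T ≥ 1, a constant C ≥ 1, and a positive concave function ψ₁ on [T,∞) such that C⁻¹ ψ₁(t) ≤ ψ(t) ≤ C ψ₁(t) for all t ≥ T. -/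
open Real Set Filter

def HasLowerPowerBound (f : ℝ → ℝ) (s c : ℝ) : Prop :=
  ∀ t ≥ (1 : ℝ), ∀ l ≥ (1 : ℝ), c * l ^ s * f t ≤ f (l * t)

def HasUpperPowerBound (f : ℝ → ℝ) (s c : ℝ) : Prop :=
  ∀ t ≥ (1 : ℝ), ∀ l ≥ (1 : ℝ), f (l * t) ≤ c * l ^ s * f t

section PowerBounds

variable {f g : ℝ → ℝ} {s c : ℝ}

lemma HasLowerPowerBound.congr (h : HasLowerPowerBound f s c) (hfg : ∀ t ≥ (1 : ℝ), f t = g t) :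
    HasLowerPowerBound g s c := fun t ht l hl => by
  simpa only [hfg t ht, hfg (l * t) (one_le_mul_of_one_le_of_one_le hl ht)] using h t ht l hl

lemma HasUpperPowerBound.congr (h : HasUpperPowerBound f s c) (hfg : ∀ t ≥ (1 : ℝ), f t = g t) :
    HasUpperPowerBound g s c := fun t ht l hl => by
  simpa only [hfg t ht, hfg (l * t) (one_le_mul_of_one_le_of_one_le hl ht)] using h t ht l hl

lemma HasLowerPowerBound.mono_exponent (h : HasLowerPowerBound f s c) {s' : ℝ} (hs : s' ≤ s)
    (hc : 0 ≤ c) (hf : ∀ t ≥ (1 : ℝ), 0 ≤ f t) : HasLowerPowerBound f s' c := fun t ht l hl =>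
  calc c * l ^ s' * f t ≤ c * l ^ s * f t := by
        gcongr
        exact hf t ht
    _ ≤ f (l * t) := h t ht l hl

lemma HasUpperPowerBound.mono_exponent (h : HasUpperPowerBound f s c) {s' : ℝ} (hs : s ≤ s')
    (hc : 0 ≤ c) (hf : ∀ t ≥ (1 : ℝ), 0 ≤ f t) : HasUpperPowerBound f s' c := fun t ht l hl =>
  calc f (l * t) ≤ c * l ^ s * f t := h t ht l hl
    _ ≤ c * l ^ s' * f t := by
        gcongr
        exact hf t ht

lemma HasLowerPowerBound.rpow_comp (h : HasLowerPowerBound f s c) {θ : ℝ} (hθ : 0 ≤ θ) (e : ℝ) :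
    HasLowerPowerBound (fun t => t ^ e * f (t ^ θ)) (e + θ * s) c := fun t ht l hl => by
  have hbound := h (t ^ θ) (one_le_rpow ht hθ) (l ^ θ) (one_le_rpow hl hθ)
  rw [← rpow_mul (by linarith)] at hbound
  have : 0 ≤ l ^ e * t ^ e := by positivity
  calc c * l ^ (e + θ * s) * (t ^ e * f (t ^ θ))
      = l ^ e * t ^ e * (c * l ^ (θ * s) * f (t ^ θ)) := by
        rw [rpow_add (by linarith)]; ring
    _ ≤ l ^ e * t ^ e * f (l ^ θ * t ^ θ) := by gcongr
    _ = (l * t) ^ e * f ((l * t) ^ θ) := by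
        rw [mul_rpow (by linarith) (by linarith), mul_rpow (by linarith) (by linarith)]

lemma HasUpperPowerBound.rpow_comp (h : HasUpperPowerBound f s c) {θ : ℝ} (hθ : 0 ≤ θ) (e : ℝ) :
    HasUpperPowerBound (fun t => t ^ e * f (t ^ θ)) (e + θ * s) c := fun t ht l hl => by
  have hbound := h (t ^ θ) (one_le_rpow ht hθ) (l ^ θ) (one_le_rpow hl hθ)
  rw [← rpow_mul (by linarith)] at hbound
  have : 0 ≤ l ^ e * t ^ e := by positivity
  calc (l * t) ^ e * f ((l * t) ^ θ) = l ^ e * t ^ e * f (l ^ θ * t ^ θ) := by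
        rw [mul_rpow (by linarith) (by linarith), mul_rpow (by linarith) (by linarith)]
    _ ≤ l ^ e * t ^ e * (c * l ^ (θ * s) * f (t ^ θ)) := by gcongr
    _ = c * l ^ (e + θ * s) * (t ^ e * f (t ^ θ)) := by
        rw [rpow_add (by linarith)]; ring

lemma HasLowerPowerBound.le_of_hasUpperPowerBound (hlo : HasLowerPowerBound f s c)
    {s' c' : ℝ} (hup : HasUpperPowerBound f s' c') (hc : 0 < c) (hf : 0 < f 1) : s ≤ s' := by
  by_contra! hlt
  obtain ⟨L, hL, hL1⟩ := (((tendsto_rpow_atTop (sub_pos.2 hlt)).eventually_gt_atTop (c' / c)).and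
    (eventually_ge_atTop 1)).exists
  have hbounds : c * L ^ s * f 1 ≤ c' * L ^ s' * f 1 :=
    (hlo 1 le_rfl L hL1).trans (hup 1 le_rfl L hL1)
  have hsplit : L ^ s = L ^ (s - s') * L ^ s' := by
    rw [← rpow_add (by linarith), sub_add_cancel]
  have hLs' : 0 < L ^ s' := rpow_pos_of_pos (by linarith) _
  have : c' < c * L ^ (s - s') := by rwa [div_lt_iff₀' hc] at hL
  rw [hsplit] at hbounds
  nlinarith [mul_lt_mul_of_pos_right this (mul_pos hLs' hf)]

end PowerBounds

namespace IsRO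

variable {α : ℝ → ℝ}

lemma exists_two_sided_bound (hα : IsRO α) : ∃ a > (1 : ℝ), ∃ c ≥ (1 : ℝ),
    ∀ t ≥ (1 : ℝ), ∀ l, 1 ≤ l → l ≤ a → α (l * t) ≤ c * α t ∧ α t ≤ c * α (l * t) := by
  obtain ⟨-, hpos, a, ha, c, hc, hratio⟩ := hα
  refine ⟨a, ha, c, hc, fun t ht l hl hla => ?_⟩
  obtain ⟨hlow, hupp⟩ := hratio t ht l hl hla
  have hαt := hpos t ht
  rw [div_le_iff₀ hαt] at hupp
  rw [le_div_iff₀ hαt, inv_mul_le_iff₀ (by linarith)] at hlow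
  exact ⟨hupp, hlow⟩

lemma pow_bound_of_two_sided_bound {a c : ℝ} (hc : 0 ≤ c)
    (hloc : ∀ t ≥ (1 : ℝ), ∀ l, 1 ≤ l → l ≤ a → α (l * t) ≤ c * α t ∧ α t ≤ c * α (l * t))
    {l : ℝ} (hl : 1 ≤ l) (hla : l ≤ a) (n : ℕ) :
    ∀ t ≥ (1 : ℝ), α (l ^ n * t) ≤ c ^ n * α t ∧ α t ≤ c ^ n * α (l ^ n * t) := by
  induction n with
  | zero => simp
  | succ n ih =>
    intro t ht
    have hlnt : 1 ≤ l ^ n * t := one_le_mul_of_one_le_of_one_le (one_le_pow₀ hl) ht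
    obtain ⟨ihup, ihlow⟩ := ih t ht
    obtain ⟨up, low⟩ := hloc _ hlnt l hl hla
    rw [pow_succ', mul_assoc]
    constructor
    · calc α (l * (l ^ n * t)) ≤ c * α (l ^ n * t) := up
        _ ≤ c * (c ^ n * α t) := by gcongr
        _ = c ^ (n + 1) * α t := by ring
    · calc α t ≤ c ^ n * α (l ^ n * t) := ihlow
        _ ≤ c ^ n * (c * α (l * (l ^ n * t))) := by gcongr
        _ = c ^ (n + 1) * α (l * (l ^ n * t)) := by ring

lemma exists_global_bound (hα : IsRO α) : ∃ s c : ℝ, 0 < c ∧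
    ∀ t ≥ (1 : ℝ), ∀ l ≥ (1 : ℝ), α (l * t) ≤ c * l ^ s * α t ∧ α t ≤ c * l ^ s * α (l * t) := by
  obtain ⟨a, ha, c, hc, hloc⟩ := hα.exists_two_sided_bound
  refine ⟨logb a c, c, by linarith, fun t ht l hl => ?_⟩
  set n := ⌊logb a l⌋₊ + 1
  have hlog : logb a l < n := by push_cast [n]; exact Nat.lt_floor_add_one _
  have hroot : (l ^ (n⁻¹ : ℝ)) ^ n = l := rpow_inv_natCast_pow (by linarith) (by positivity)
  have hroot_le : l ^ (n⁻¹ : ℝ) ≤ a := by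
    rw [rpow_inv_le_iff_of_pos (by linarith) (by linarith) (by positivity)]
    exact ((logb_lt_iff_lt_rpow ha (by linarith)).1 hlog).le
  -- `c ^ logb a l = l ^ logb a c`: both sides are `exp (log c * log l / log a)`
  have hcn : c ^ n ≤ c * l ^ logb a c := by
    calc c ^ n = c * (c : ℝ) ^ (⌊logb a l⌋₊ : ℝ) := by rw [rpow_natCast, pow_succ']
      _ ≤ c * c ^ logb a l := by
          gcongr
          exact Nat.floor_le (logb_nonneg ha hl)
      _ = c * l ^ logb a c := by
          rw [rpow_def_of_pos (by linarith), rpow_def_of_pos (by linarith), logb, logb]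
          ring_nf
  obtain ⟨up, low⟩ := pow_bound_of_two_sided_bound (by linarith) hloc
    (one_le_rpow hl (by positivity)) hroot_le n t ht
  rw [hroot] at up low
  have hαt := hα.2.1 t ht
  have hαlt := hα.2.1 (l * t) (one_le_mul_of_one_le_of_one_le hl ht)
  exact ⟨up.trans (by gcongr), low.trans (by gcongr)⟩

lemma exists_lowerPowerBound_of_lt_sigma0 (hα : IsRO α) {s₀ : ℝ} (h : s₀ < sigma0 α) :
    ∃ s > s₀, ∃ c > 0, HasLowerPowerBound α s c := by
  obtain ⟨s, c, hc, hbound⟩ := hα.exists_global_bound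
  have hne : ∃ c' > 0, HasLowerPowerBound α (-s) c' := ⟨c⁻¹, inv_pos.2 hc, fun t ht l hl => by
    rw [rpow_neg (by linarith), ← mul_inv, inv_mul_le_iff₀ (by positivity)]
    exact (hbound t ht l hl).2⟩
  obtain ⟨s', hs', hlt⟩ := exists_lt_of_lt_csSup ⟨-s, hne⟩ h
  exact ⟨s', hlt, hs'⟩

lemma exists_upperPowerBound_of_sigma1_lt (hα : IsRO α) {s₁ : ℝ} (h : sigma1 α < s₁) :
    ∃ s < s₁, ∃ c > 0, HasUpperPowerBound α s c := by
  obtain ⟨s, c, hc, hbound⟩ := hα.exists_global_bound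
  have hne : ∃ c' > 0, HasUpperPowerBound α s c' := ⟨c, hc, fun t ht l hl => (hbound t ht l hl).1⟩
  unfold sigma1 at h
  obtain ⟨s', hs', hlt⟩ := exists_lt_of_csInf_lt ⟨s, hne⟩ h
  exact ⟨s', hlt, hs'⟩

end IsRO

section Boundedness

variable {g : ℝ → ℝ} {s c : ℝ}

lemma HasLowerPowerBound.le_of_le (h : HasLowerPowerBound g s c) {t u : ℝ} (ht : 1 ≤ t)
    (htu : t ≤ u) : c * (u / t) ^ s * g t ≤ g u := by
  simpa [div_mul_cancel₀ u (by linarith : t ≠ 0)] using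
    h t ht (u / t) ((one_le_div₀ (by linarith)).2 htu)

lemma HasUpperPowerBound.le_of_le (h : HasUpperPowerBound g s c) {t u : ℝ} (ht : 1 ≤ t)
    (htu : t ≤ u) : g u ≤ c * (u / t) ^ s * g t := by
  simpa [div_mul_cancel₀ u (by linarith : t ≠ 0)] using
    h t ht (u / t) ((one_le_div₀ (by linarith)).2 htu)

lemma HasUpperPowerBound.exists_bound_Icc (h : HasUpperPowerBound g s c)
    (hg : ∀ t, 0 < t → t < 1 → g t = g 1) {a b : ℝ} (ha : 0 < a) :
    ∃ M, ∀ t ∈ Icc a b, g t ≤ M := by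
  obtain ⟨M, hM⟩ := (isCompact_Icc (a := 1) (b := b)).bddAbove_image
    (f := fun t => c * t ^ s * g 1) (by fun_prop (disch := intro t ht; linarith [ht.1]))
  refine ⟨max (g 1) M, fun t ht => ?_⟩
  rcases lt_or_ge t 1 with ht1 | ht1
  · exact (hg t (ha.trans_le ht.1) ht1).trans_le (le_max_left _ _)
  · calc g t ≤ c * (t / 1) ^ s * g 1 := h.le_of_le le_rfl ht1
      _ ≤ M := by rw [div_one]; exact hM ⟨t, ⟨ht1, ht.2⟩, rfl⟩
      _ ≤ max (g 1) M := le_max_right _ _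

lemma HasLowerPowerBound.exists_inv_bound (h : HasLowerPowerBound g 0 c) (hc : 0 < c)
    (hg1 : 0 < g 1) (hg : ∀ t, 0 < t → t < 1 → g t = g 1) :
    ∀ r > (0 : ℝ), ∃ M, ∀ t ≥ r, (g t)⁻¹ ≤ M := fun r hr =>
  ⟨max (g 1)⁻¹ (c * g 1)⁻¹, fun t ht => by
    rcases lt_or_ge t 1 with ht1 | ht1
    · rw [hg t (hr.trans_le ht) ht1]
      exact le_max_left _ _
    · have hlow : c * g 1 ≤ g t := by simpa using h.le_of_le le_rfl ht1
      exact (inv_anti₀ (by positivity) hlow).trans (le_max_right _ _)⟩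

end Boundedness

def IsPseudoconcaveOnIci (T : ℝ) (g : ℝ → ℝ) : Prop :=
  ∃ C ≥ (1 : ℝ), ∃ φ : ℝ → ℝ, (∀ t ≥ T, 0 < φ t) ∧ ConcaveOn ℝ (Ici T) φ ∧
    ∀ t ≥ T, C⁻¹ * φ t ≤ g t ∧ g t ≤ C * φ t

lemma concaveOn_ciInf {E ι : Type*} [AddCommMonoid E] [Module ℝ E] [Nonempty ι] {s : Set E}
    {f : ι → E → ℝ} (hf : ∀ i, ConcaveOn ℝ s (f i))
    (hbdd : ∀ x ∈ s, BddBelow (range fun i => f i x)) : ConcaveOn ℝ s fun x => ⨅ i, f i x :=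
  ⟨(hf (Classical.arbitrary ι)).1, fun x hx y hy _ _ ha hb hab => le_ciInf fun i =>
    (add_le_add (smul_le_smul_of_nonneg_left (ciInf_le (hbdd x hx) i) ha)
      (smul_le_smul_of_nonneg_left (ciInf_le (hbdd y hy) i) hb)).trans ((hf i).2 hx hy ha hb hab)⟩

section Pseudoconcave

variable {g : ℝ → ℝ} {c₀ c₁ : ℝ}

lemma le_max_mul_of_powerBounds (hpos : ∀ t ≥ (1 : ℝ), 0 < g t) (hc₀ : 0 < c₀)
    (hlo : HasLowerPowerBound g 0 c₀) (hup : HasUpperPowerBound g 1 c₁) {t u : ℝ}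
    (ht : 1 ≤ t) (hu : 1 ≤ u) : g t ≤ max c₀⁻¹ c₁ * (g u * (1 + t / u)) := by
  have hgu := hpos u hu
  have htu : 0 ≤ t / u := by positivity
  rcases le_total t u with htu' | hut
  · have hlow : c₀ * g t ≤ g u := by simpa using hlo.le_of_le ht htu'
    calc g t ≤ c₀⁻¹ * g u := by rwa [le_inv_mul_iff₀ hc₀]
      _ ≤ max c₀⁻¹ c₁ * (g u * (1 + t / u)) := by
          gcongr
          · exact le_max_left _ _
          · exact le_mul_of_one_le_right hgu.le (by linarith)
  · have hupp : g t ≤ c₁ * (t / u) * g u := by simpa using hup.le_of_le hu hut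
    calc g t ≤ c₁ * (t / u) * g u := hupp
      _ ≤ max c₀⁻¹ c₁ * (g u * (1 + t / u)) := by
          have hK : 0 ≤ max c₀⁻¹ c₁ := (inv_pos.2 hc₀).le.trans (le_max_left _ _)
          nlinarith [mul_le_mul_of_nonneg_right (le_max_right c₀⁻¹ c₁) (mul_nonneg htu hgu.le),
            mul_nonneg hK hgu.le]

lemma isPseudoconcaveOnIci_one_of_powerBounds (hpos : ∀ t ≥ (1 : ℝ), 0 < g t) (hc₀ : 0 < c₀)
    (hlo : HasLowerPowerBound g 0 c₀) (hup : HasUpperPowerBound g 1 c₁) :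
    IsPseudoconcaveOnIci 1 g := by
  set K := max c₀⁻¹ c₁
  have hK : 0 < K := (inv_pos.2 hc₀).trans_le (le_max_left _ _)
  set φ : ℝ → ℝ := fun t => ⨅ u : Ici (1 : ℝ), g u * (1 + t / u)
  have hbdd : ∀ t ∈ Ici (1 : ℝ), BddBelow (range fun u : Ici (1 : ℝ) => g u * (1 + t / u)) :=
    fun t ht => ⟨0, by
      rintro _ ⟨⟨u, hu⟩, rfl⟩
      have := hpos u hu
      have : (0 : ℝ) ≤ t / u :=
        div_nonneg (by linarith [mem_Ici.1 ht]) (by linarith [mem_Ici.1 hu])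
      positivity⟩
  have hmajor : ∀ t ≥ (1 : ℝ), g t ≤ K * φ t := fun t ht => by
    rw [← div_le_iff₀' hK]
    exact le_ciInf fun u => by
      rw [div_le_iff₀' hK]; exact le_max_mul_of_powerBounds hpos hc₀ hlo hup ht u.2
  have hminor : ∀ t ≥ (1 : ℝ), φ t ≤ 2 * g t := fun t ht =>
    (ciInf_le (hbdd t ht) ⟨t, ht⟩).trans_eq (by field_simp; ring)
  have hφpos : ∀ t ≥ (1 : ℝ), 0 < φ t := fun t ht =>
    pos_of_mul_pos_right ((hpos t ht).trans_le (hmajor t ht)) hK.le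
  have hconc : ConcaveOn ℝ (Ici 1) φ := concaveOn_ciInf (fun u =>
    ⟨convex_Ici 1, fun x _ y _ a b _ _ hab => le_of_eq (by
      have : (u : ℝ) ≠ 0 := by linarith [mem_Ici.1 u.2]
      simp only [smul_eq_mul]; field_simp; linear_combination (g u * u) * hab)⟩) hbdd
  refine ⟨max 2 K, le_max_of_le_left one_le_two, φ, hφpos, hconc, fun t ht => ⟨?_, ?_⟩⟩
  · rw [inv_mul_le_iff₀ (by positivity)]
    exact (hminor t ht).trans (by gcongr; exacts [(hpos t ht).le, le_max_left _ _])
  · exact (hmajor t ht).trans (by gcongr; exacts [(hφpos t ht).le, le_max_right _ _])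

end Pseudoconcave

/-- Let `α ∈ RO`, `s₀ < σ₀(α)`, `s₁ > σ₁(α)`, and let
`ψ(t) := t^{−s₀/(s₁−s₀)} α(t^{1/(s₁−s₀)})` for `t ≥ 1`, `ψ(t) := α(1)` for `0 < t < 1`.
Then (a) `ψ` is bounded on every compact interval `[a,b] ⊂ (0,∞)` and `1/ψ` is bounded on
every `[r,∞)` with `r > 0` (i.e. `ψ ∈ ℬ`); and (b) `ψ` is pseudoconcave near `+∞`:
there are `T ≥ 1`, `C ≥ 1` and a positive concave function `ψ₁` on `[T,∞)` with
`C⁻¹ ψ₁(t) ≤ ψ(t) ≤ C ψ₁(t)` for `t ≥ T`. -/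
theorem statement12 (α : ℝ → ℝ) (hα : IsRO α) (s₀ s₁ : ℝ)
    (h0 : s₀ < sigma0 α) (h1 : sigma1 α < s₁) (ψ : ℝ → ℝ)
    (hψ₁ : ∀ t ≥ (1 : ℝ), ψ t = t ^ (-s₀ / (s₁ - s₀)) * α (t ^ (1 / (s₁ - s₀))))
    (hψ₂ : ∀ t : ℝ, 0 < t → t < 1 → ψ t = α 1) :
    ((∀ a b : ℝ, 0 < a → a < b → ∃ M : ℝ, ∀ t ∈ Set.Icc a b, ψ t ≤ M) ∧
      (∀ r > (0 : ℝ), ∃ M : ℝ, ∀ t ≥ r, (ψ t)⁻¹ ≤ M)) ∧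
    ∃ T ≥ (1 : ℝ), ∃ C ≥ (1 : ℝ), ∃ ψ' : ℝ → ℝ,
      (∀ t ≥ T, 0 < ψ' t) ∧ ConcaveOn ℝ (Set.Ici T) ψ' ∧
      ∀ t ≥ T, C⁻¹ * ψ' t ≤ ψ t ∧ ψ t ≤ C * ψ' t := by
  have hαpos := hα.2.1
  obtain ⟨s₀', hs₀', c₀, hc₀, hlo⟩ := hα.exists_lowerPowerBound_of_lt_sigma0 h0
  obtain ⟨s₁', hs₁', c₁, hc₁, hup⟩ := hα.exists_upperPowerBound_of_sigma1_lt h1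
  have hs : 0 < s₁ - s₀ := by linarith [hlo.le_of_hasUpperPowerBound hup hc₀ (hαpos 1 le_rfl)]
  have hψpos : ∀ t ≥ (1 : ℝ), 0 < ψ t := fun t ht => by
    rw [hψ₁ t ht]
    exact mul_pos (by positivity) (hαpos _ (one_le_rpow ht (by positivity)))
  have hψ1 : ψ 1 = α 1 := by simpa using hψ₁ 1 le_rfl
  have hψconst : ∀ t, 0 < t → t < 1 → ψ t = ψ 1 := fun t ht0 ht1 => hψ1 ▸ hψ₂ t ht0 ht1
  have hψlo : HasLowerPowerBound ψ 0 c₀ :=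
    ((hlo.rpow_comp (by positivity) _).congr fun t ht => (hψ₁ t ht).symm).mono_exponent
      (by field_simp; linarith) hc₀.le fun t ht => (hψpos t ht).le
  have hψup : HasUpperPowerBound ψ 1 c₁ :=
    ((hup.rpow_comp (by positivity) _).congr fun t ht => (hψ₁ t ht).symm).mono_exponent
      (by field_simp; linarith) hc₁.le fun t ht => (hψpos t ht).le
  exact ⟨⟨fun a b ha _ => hψup.exists_bound_Icc hψconst ha,
    hψlo.exists_inv_bound hc₀ (hψpos 1 le_rfl) hψconst⟩, 1, le_rfl,
    isPseudoconcaveOnIci_one_of_powerBounds hψpos hc₀ hψlo hψup⟩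
end

section
/- Let n ≥ 2 and q ≥ 1 be integers, and let A : ℂⁿ × ℂ → ℂ be the polynomial function A(ζ, λ) = Σ_{r=0}^{2q} λ^{2q−r} Σ_{|μ|=r} a_{r,μ} ζ^{μ}, where the a_{r,μ} are complex coefficients (so A is homogeneous of degree 2q in the variables (ζ, λ)). Let θ₁ ≤ θ₂ be real numbers and K := { r·e^{iθ} : r ∈ [0,∞), θ ∈ [θ₁, θ₂] } ⊆ ℂ a closed angle with vertex at the origin. Assume A(ξ, λ) ≠ 0 for every ξ ∈ ℝⁿ and every λ ∈ K with |ξ| + |λ| ≠ 0. Then for every ξ ∈ ℝⁿ, every unit vector ν ∈ ℝⁿ orthogonal to ξ, and every λ ∈ K with |ξ| + |λ| ≠ 0, the one-variable polynomial p(τ) := A(ξ + τν, λ) in τ ∈ ℂ has degree exactly 2q, has no real roots, and has exactly q roots (counted with multiplicity) with Im τ > 0 and exactly q roots (counted with multiplicity) with Im τ < 0. -/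
/-!
For an admissible triple `(ξ, ν, λ)` (`ν` a unit vector orthogonal to `ξ`, `λ ∈ K`,
`(ξ, λ) ≠ 0`), the polynomial `τ ↦ A(ξ + τν, λ)` has leading coefficient `A(ν, 0) ≠ 0` and,
by ellipticity, no real roots. Its roots depend continuously on the triple and never cross the
real axis, so the numbers of roots in the upper and lower half-planes are constant along paths
of admissible triples. Every admissible triple is joined to some `(0, ν, λ')` with `λ' ≠ 0`
(first make `λ` nonzero, then shrink `ξ`), and since the unit sphere is connected for `n ≥ 2`,
`(0, ν, λ')` is joined to `(0, -ν, λ')`. Replacing `ν` by `-ν` turns `τ` into `-τ` and swaps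
the two counts, so they are equal, and they add up to the degree `2q`.
-/

open Complex Polynomial Filter Topology

/-- The principal symbol `A(ζ, λ) = Σ_{r=0}^{2q} λ^{2q−r} Σ_{|μ|=r} a_{r,μ} ζ^μ`,
a homogeneous polynomial of degree `2q` in `(ζ, λ) ∈ ℂⁿ × ℂ`. -/
noncomputable def principalSymbol (n q : ℕ) (a : ℕ → (Fin n → ℕ) → ℂ)
    (ζ : Fin n → ℂ) (lam : ℂ) : ℂ :=
  ∑ r ∈ Finset.range (2 * q + 1), lam ^ (2 * q - r) *
    ∑ μ ∈ Finset.Nat.antidiagonalTuple n r, a r μ * ∏ i, ζ i ^ μ i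

/-- The closed angle `K := { r·e^{iθ} : r ≥ 0, θ ∈ [θ₁, θ₂] }` with vertex at the
origin. -/
def closedAngle (θ₁ θ₂ : ℝ) : Set ℂ :=
  {z : ℂ | ∃ r : ℝ, 0 ≤ r ∧ ∃ θ : ℝ, θ₁ ≤ θ ∧ θ ≤ θ₂ ∧ z = r * Complex.exp (θ * Complex.I)}

theorem Multiset.Rel.card_filter_eq {α β : Type*} {P : α → Prop} {Q : β → Prop}
    [DecidablePred P] [DecidablePred Q] {s : Multiset α} {t : Multiset β}
    (h : Multiset.Rel (fun a b => P a ↔ Q b) s t) :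
    Multiset.card (s.filter P) = Multiset.card (t.filter Q) := by
  induction h with
  | zero => rfl
  | @cons a b _ _ hab _ ih =>
    by_cases hP : P a
    · simp [hP, hab.mp hP, ih]
    · simp [hP, mt hab.mpr hP, ih]

namespace Polynomial

theorem coeff_prod_sum_of_natDegree_le {R ι : Type*} [CommSemiring R] (s : Finset ι)
    (f : ι → R[X]) (d : ι → ℕ) (h : ∀ i ∈ s, (f i).natDegree ≤ d i) :
    (∏ i ∈ s, f i).coeff (∑ i ∈ s, d i) = ∏ i ∈ s, (f i).coeff (d i) := by
  induction s using Finset.cons_induction with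
  | empty => simp
  | cons b s hb ih =>
    have hs : ∀ i ∈ s, (f i).natDegree ≤ d i := fun i hi => h i (Finset.mem_cons_of_mem hi)
    rw [Finset.prod_cons, Finset.sum_cons,
      coeff_mul_add_eq_of_natDegree_le (h b (s.mem_cons_self b))
        ((natDegree_prod_le _ _).trans (Finset.sum_le_sum hs)), ih hs, Finset.prod_cons]

theorem roots_eq_cons_roots_divByMonic {K : Type*} [Field K] {p : K[X]} {a : K} (hp : p ≠ 0)
    (ha : p.IsRoot a) : p.roots = a ::ₘ (p /ₘ (X - C a)).roots := by
  have hfac := mul_divByMonic_eq_iff_isRoot.mpr ha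
  conv_lhs => rw [← hfac]
  rw [roots_mul (hfac.symm ▸ hp), roots_X_sub_C, Multiset.singleton_add]

variable {ι : Type*} {l : Filter ι} {d : ℕ}

theorem tendsto_eval_of_tendsto_coeff {R : Type*} [Semiring R] [TopologicalSpace R]
    [IsTopologicalSemiring R] {p : ι → R[X]} {q : R[X]}
    (hpd : ∀ i, (p i).natDegree ≤ d) (hqd : q.natDegree ≤ d)
    (hc : ∀ j, Tendsto (fun i => (p i).coeff j) l (𝓝 (q.coeff j)))
    {z : ι → R} {w : R} (hz : Tendsto z l (𝓝 w)) :
    Tendsto (fun i => (p i).eval (z i)) l (𝓝 (q.eval w)) := by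
  simp only [eval_eq_sum_range' (Nat.lt_succ_of_le (hpd _)),
    eval_eq_sum_range' (Nat.lt_succ_of_le hqd)]
  exact tendsto_finsetSum _ fun j _ => (hc j).mul (hz.pow j)

theorem tendsto_coeff_divByMonic_X_sub_C {R : Type*} [CommRing R] [TopologicalSpace R]
    [IsTopologicalRing R] {p : ι → R[X]} {q : R[X]}
    (hpd : ∀ i, (p i).natDegree = d) (hqd : q.natDegree = d)
    (hc : ∀ j, Tendsto (fun i => (p i).coeff j) l (𝓝 (q.coeff j)))
    {z : ι → R} {w : R} (hz : Tendsto z l (𝓝 w)) (j : ℕ) :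
    Tendsto (fun i => (p i /ₘ (X - C (z i))).coeff j) l (𝓝 ((q /ₘ (X - C w)).coeff j)) := by
  simp only [coeff_divByMonic_X_sub_C, hpd, hqd]
  exact tendsto_finsetSum _ fun k _ => (hz.pow _).mul (hc k)

theorem tendsto_cauchyBound {K : Type*} [NormedField K] {p : ι → K[X]} {q : K[X]}
    (hpd : ∀ i, (p i).natDegree = d) (hqd : q.natDegree = d) (hq : q ≠ 0)
    (hc : ∀ j, Tendsto (fun i => (p i).coeff j) l (𝓝 (q.coeff j))) :
    Tendsto (fun i => (p i).cauchyBound) l (𝓝 q.cauchyBound) := by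
  simp only [cauchyBound, leadingCoeff, hpd, hqd]
  refine ((Filter.Tendsto.finset_sup_nhds_apply fun j _ => (hc j).nnnorm).div
    (hc d).nnnorm ?_).add_const 1
  rw [← hqd]
  exact nnnorm_ne_zero_iff.mpr (leadingCoeff_ne_zero.mpr hq)

theorem eventually_norm_le_of_mem_roots {K : Type*} [NormedField K] {p : ι → K[X]} {q : K[X]}
    (hpd : ∀ i, (p i).natDegree = d) (hqd : q.natDegree = d) (hq : q ≠ 0)
    (hc : ∀ j, Tendsto (fun i => (p i).coeff j) l (𝓝 (q.coeff j))) :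
    ∀ᶠ i in l, ∀ z ∈ (p i).roots, ‖z‖ ≤ q.cauchyBound + 1 :=
  ((tendsto_cauchyBound hpd hqd hq hc).eventually (eventually_lt_nhds (lt_add_one _))).mono
    fun _ hi _ hz => (IsRoot.norm_lt_cauchyBound (ne_zero_of_mem_roots hz)
      (isRoot_of_mem_roots hz)).le.trans (by exact_mod_cast hi.le)

theorem exists_subseq_eventually_rel_roots {r : ℂ → ℂ → Prop} {d : ℕ} {p : ℕ → ℂ[X]}
    {q : ℂ[X]} (hpd : ∀ k, (p k).natDegree = d) (hqd : q.natDegree = d)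
    (hc : ∀ j, Tendsto (fun k => (p k).coeff j) atTop (𝓝 (q.coeff j)))
    (hr : ∀ b ∈ q.roots, ∀ᶠ a in 𝓝 b, r a b) :
    ∃ φ : ℕ → ℕ, StrictMono φ ∧ ∀ᶠ k in atTop, Multiset.Rel r (p (φ k)).roots q.roots := by
  induction d generalizing p q with
  | zero =>
    refine ⟨id, strictMono_id, .of_forall fun k => ?_⟩
    rw [id, Multiset.card_eq_zero.mp (IsAlgClosed.card_roots_eq_natDegree.trans (hpd k)),
      Multiset.card_eq_zero.mp (IsAlgClosed.card_roots_eq_natDegree.trans hqd)]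
    exact .zero
  | succ d ih =>
    -- Peel off one root: by Cauchy's bound a subsequence of roots `z k` of `p k` converges to a
    -- root `w` of `q`, and the induction hypothesis applies to the quotients by `X - C (z k)`.
    have hq : q ≠ 0 := by rintro rfl; simp at hqd
    choose z hz using fun k => Multiset.card_pos_iff_exists_mem.mp
      (by rw [IsAlgClosed.card_roots_eq_natDegree, hpd k]; omega : 0 < Multiset.card (p k).roots)
    have hbound : ∃ᶠ k in atTop, z k ∈ Metric.closedBall (0 : ℂ) (q.cauchyBound + 1) :=
      ((eventually_norm_le_of_mem_roots hpd hqd hq hc).mono fun k hk =>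
        mem_closedBall_zero_iff.mpr (hk _ (hz k))).frequently
    obtain ⟨w, -, φ₀, hφ₀, hzw⟩ :=
      tendsto_subseq_of_frequently_bounded Metric.isBounded_closedBall hbound
    have hcφ : ∀ j, Tendsto (fun k => (p (φ₀ k)).coeff j) atTop (𝓝 (q.coeff j)) :=
      fun j => (hc j).comp hφ₀.tendsto_atTop
    have hw : q.IsRoot w := tendsto_nhds_unique
      (tendsto_eval_of_tendsto_coeff (fun k => (hpd _).le) hqd.le hcφ hzw)
      (tendsto_const_nhds.congr fun k => (isRoot_of_mem_roots (hz (φ₀ k))).symm)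
    have hqroots := roots_eq_cons_roots_divByMonic hq hw
    obtain ⟨ψ, hψ, hrel⟩ := ih (p := fun k => p (φ₀ k) /ₘ (X - C (z (φ₀ k))))
      (q := q /ₘ (X - C w))
      (fun k => by rw [natDegree_divByMonic _ (monic_X_sub_C _), hpd, natDegree_X_sub_C]; rfl)
      (by rw [natDegree_divByMonic _ (monic_X_sub_C _), hqd, natDegree_X_sub_C]; rfl)
      (tendsto_coeff_divByMonic_X_sub_C (fun k => hpd _) hqd hcφ hzw)
      (fun b hb => hr b (hqroots ▸ Multiset.mem_cons_of_mem hb))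
    refine ⟨φ₀ ∘ ψ, hφ₀.comp hψ, ?_⟩
    filter_upwards [hrel, (hzw.comp hψ.tendsto_atTop).eventually
      (hr w (hqroots ▸ Multiset.mem_cons_self _ _))] with k hk hzk
    rw [Function.comp_apply, roots_eq_cons_roots_divByMonic (ne_zero_of_mem_roots (hz _))
      (isRoot_of_mem_roots (hz _)), hqroots]
    exact hk.cons hzk

end Polynomial

noncomputable def halfPlaneRootCounts (P : ℂ[X]) : ℕ × ℕ :=
  (Multiset.card (P.roots.filter fun z => 0 < z.im),
   Multiset.card (P.roots.filter fun z => z.im < 0))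

theorem halfPlaneRootCounts_comp_neg_X (P : ℂ[X]) :
    halfPlaneRootCounts (P.comp (-X)) = (halfPlaneRootCounts P).swap := by
  simp only [halfPlaneRootCounts, roots_comp_neg_X, Multiset.filter_map, Multiset.card_map,
    Function.comp_def, neg_im, neg_pos, neg_lt_zero, Prod.swap_prod_mk]

theorem im_ne_zero_of_mem_roots {P : ℂ[X]} (hP : ∀ x : ℝ, P.eval (x : ℂ) ≠ 0) {z : ℂ}
    (hz : z ∈ P.roots) : z.im ≠ 0 := fun him => by
  have hre : (z.re : ℂ) = z := Complex.ext rfl (by simp [him])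
  exact hP z.re (by rw [hre]; exact isRoot_of_mem_roots hz)

theorem halfPlaneRootCounts_fst_add_snd {P : ℂ[X]} (hP : ∀ x : ℝ, P.eval (x : ℂ) ≠ 0) :
    (halfPlaneRootCounts P).1 + (halfPlaneRootCounts P).2 = P.natDegree := by
  rw [halfPlaneRootCounts, ← Multiset.card_add, ← IsAlgClosed.card_roots_eq_natDegree,
    Multiset.filter_add_filter, Multiset.filter_eq_self.mpr fun z hz =>
      (im_ne_zero_of_mem_roots hP hz).lt_or_gt.symm,
    Multiset.filter_eq_nil.mpr fun z _ h => h.1.not_gt h.2, add_zero]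

theorem exists_subseq_eventually_halfPlaneRootCounts_eq {p : ℕ → ℂ[X]} {q : ℂ[X]} {d : ℕ}
    (hpd : ∀ k, (p k).natDegree = d) (hqd : q.natDegree = d)
    (hc : ∀ j, Tendsto (fun k => (p k).coeff j) atTop (𝓝 (q.coeff j)))
    (hq : ∀ x : ℝ, q.eval (x : ℂ) ≠ 0) :
    ∃ φ : ℕ → ℕ, StrictMono φ ∧
      ∀ᶠ k in atTop, halfPlaneRootCounts (p (φ k)) = halfPlaneRootCounts q := by
  obtain ⟨φ, hφ, hrel⟩ := exists_subseq_eventually_rel_roots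
    (r := fun a b => (0 < a.im ↔ 0 < b.im) ∧ (a.im < 0 ↔ b.im < 0)) hpd hqd hc fun b hb => by
      rcases (im_ne_zero_of_mem_roots hq hb).lt_or_gt with h | h
      · filter_upwards [continuous_im.continuousAt.eventually (gt_mem_nhds h)] with a ha
        exact ⟨iff_of_false ha.not_gt h.not_gt, iff_of_true ha h⟩
      · filter_upwards [continuous_im.continuousAt.eventually (lt_mem_nhds h)] with a ha
        exact ⟨iff_of_true ha h, iff_of_false ha.not_gt h.not_gt⟩
  exact ⟨φ, hφ, hrel.mono fun k hk => Prod.ext (hk.mono fun _ _ _ _ h => h.1).card_filter_eq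
    (hk.mono fun _ _ _ _ h => h.2).card_filter_eq⟩

/-- Continuity of a family of polynomials, coefficient by coefficient (`R[X]` carries no
topology). -/
def ContinuousCoeffs {α R : Type*} [TopologicalSpace α] [Semiring R] [TopologicalSpace R]
    (F : α → R[X]) : Prop :=
  ∀ j, Continuous fun x => (F x).coeff j

namespace ContinuousCoeffs

variable {α R : Type*} [TopologicalSpace α] [CommSemiring R] [TopologicalSpace R]
  [IsTopologicalSemiring R] {f g : α → R[X]}

omit [IsTopologicalSemiring R] in
theorem const (p : R[X]) : ContinuousCoeffs fun _ : α => p := fun _ => continuous_const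

omit [IsTopologicalSemiring R] in
theorem C {c : α → R} (hc : Continuous c) : ContinuousCoeffs fun x => Polynomial.C (c x) := by
  intro j
  by_cases hj : j = 0 <;> simp [coeff_C, hj, hc, continuous_const]

theorem add (hf : ContinuousCoeffs f) (hg : ContinuousCoeffs g) :
    ContinuousCoeffs fun x => f x + g x := fun j => by
  simp only [coeff_add]
  exact (hf j).add (hg j)

theorem mul (hf : ContinuousCoeffs f) (hg : ContinuousCoeffs g) :
    ContinuousCoeffs fun x => f x * g x := fun j => by
  simpa only [coeff_mul] using continuous_finsetSum _ fun i _ => (hf i.1).mul (hg i.2)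

theorem pow (hf : ContinuousCoeffs f) (m : ℕ) : ContinuousCoeffs fun x => f x ^ m := by
  induction m with
  | zero => simpa using const 1
  | succ m ih => simpa only [pow_succ] using ih.mul hf

theorem sum {ι : Type*} (s : Finset ι) {f : ι → α → R[X]} (h : ∀ i ∈ s, ContinuousCoeffs (f i)) :
    ContinuousCoeffs fun x => ∑ i ∈ s, f i x := fun j => by
  simpa only [finsetSum_coeff] using continuous_finsetSum _ fun i hi => h i hi j

theorem prod {ι : Type*} (s : Finset ι) {f : ι → α → R[X]} (h : ∀ i ∈ s, ContinuousCoeffs (f i)) :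
    ContinuousCoeffs fun x => ∏ i ∈ s, f i x := by
  induction s using Finset.cons_induction with
  | empty => simpa using const 1
  | cons b s hb ih =>
    simp only [Finset.prod_cons]
    exact (h b (s.mem_cons_self b)).mul (ih fun i hi => h i (Finset.mem_cons_of_mem hi))

end ContinuousCoeffs

theorem isLocallyConstant_halfPlaneRootCounts {X : Type*} [TopologicalSpace X]
    [FirstCountableTopology X] {F : X → ℂ[X]} {d : ℕ} (hF : ContinuousCoeffs F)
    (hd : ∀ x, (F x).natDegree = d) (hreal : ∀ x, ∀ t : ℝ, (F x).eval (t : ℂ) ≠ 0) :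
    IsLocallyConstant (halfPlaneRootCounts ∘ F) := by
  refine (IsLocallyConstant.iff_eventually_eq _).mpr fun x => ?_
  by_contra hne
  obtain ⟨u, hu, hune⟩ := exists_seq_forall_of_frequently (not_eventually.mp hne)
  obtain ⟨φ, -, hφ⟩ := exists_subseq_eventually_halfPlaneRootCounts_eq (fun k => hd (u k)) (hd x)
    (fun j => ((hF j).tendsto x).comp hu) (hreal x)
  obtain ⟨k, hk⟩ := hφ.exists
  exact hune (φ k) hk

theorem JoinedIn.eq_of_isLocallyConstant_subtype {X Y : Type*} [TopologicalSpace X]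
    {S : Set X} {f : X → Y} (hf : IsLocallyConstant fun x : S => f x) {x y : X}
    (h : JoinedIn S x y) : f x = f y := by
  obtain ⟨γ⟩ := h.joined_subtype
  simpa using (hf.comp_continuous γ.continuous).apply_eq_of_preconnectedSpace 0 1

section SymbolPoly

variable (n q : ℕ) (a : ℕ → (Fin n → ℕ) → ℂ)

noncomputable def symbolPolyPart (r : ℕ) (ξ ν : Fin n → ℝ) : ℂ[X] :=
  ∑ μ ∈ Finset.Nat.antidiagonalTuple n r,
    C (a r μ) * ∏ i, (C (ν i : ℂ) * X + C (ξ i : ℂ)) ^ μ i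

noncomputable def symbolPoly (ξ ν : Fin n → ℝ) (lam : ℂ) : ℂ[X] :=
  ∑ r ∈ Finset.range (2 * q + 1), C (lam ^ (2 * q - r)) * symbolPolyPart n a r ξ ν

variable {n q a}

theorem eval_symbolPoly (ξ ν : Fin n → ℝ) (lam τ : ℂ) :
    (symbolPoly n q a ξ ν lam).eval τ =
      principalSymbol n q a (fun i => (ξ i : ℂ) + τ * (ν i : ℂ)) lam := by
  simp only [symbolPoly, symbolPolyPart, principalSymbol, eval_finsetSum, eval_mul, eval_C,
    eval_prod, eval_pow, eval_add, eval_X, mul_comm τ, add_comm (_ * τ)]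

theorem natDegree_symbolPolyPart_le (r : ℕ) (ξ ν : Fin n → ℝ) :
    (symbolPolyPart n a r ξ ν).natDegree ≤ r := by
  refine natDegree_sum_le_of_forall_le _ _ fun μ hμ => natDegree_C_mul_le _ _ |>.trans ?_
  refine (natDegree_prod_le _ _).trans ?_
  rw [← Finset.Nat.mem_antidiagonalTuple.mp hμ]
  exact Finset.sum_le_sum fun i _ =>
    (natDegree_pow_le_of_le _ natDegree_linear_le).trans (mul_one _).le

theorem coeff_symbolPolyPart_self (r : ℕ) (ξ ν : Fin n → ℝ) :
    (symbolPolyPart n a r ξ ν).coeff r =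
      ∑ μ ∈ Finset.Nat.antidiagonalTuple n r, a r μ * ∏ i, (ν i : ℂ) ^ μ i := by
  simp only [symbolPolyPart, finsetSum_coeff, coeff_C_mul]
  refine Finset.sum_congr rfl fun μ hμ => ?_
  obtain rfl := Finset.Nat.mem_antidiagonalTuple.mp hμ
  rw [coeff_prod_sum_of_natDegree_le _ _ _ fun i _ =>
    (natDegree_pow_le_of_le _ natDegree_linear_le).trans (mul_one _).le]
  congr 1
  refine Finset.prod_congr rfl fun i _ => ?_
  have h := coeff_pow_of_natDegree_le (m := μ i) (natDegree_linear_le (a := (ν i : ℂ)) (b := ξ i))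
  simpa using h

theorem natDegree_symbolPoly_le (ξ ν : Fin n → ℝ) (lam : ℂ) :
    (symbolPoly n q a ξ ν lam).natDegree ≤ 2 * q :=
  natDegree_sum_le_of_forall_le _ _ fun r hr => (natDegree_C_mul_le _ _).trans <|
    (natDegree_symbolPolyPart_le r ξ ν).trans (Nat.lt_succ_iff.mp (Finset.mem_range.mp hr))

theorem principalSymbol_zero_right (ζ : Fin n → ℂ) :
    principalSymbol n q a ζ 0 =
      ∑ μ ∈ Finset.Nat.antidiagonalTuple n (2 * q), a (2 * q) μ * ∏ i, ζ i ^ μ i := by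
  rw [principalSymbol, Finset.sum_eq_single_of_mem (2 * q) (Finset.self_mem_range_succ _)
    fun r hr hne => by rw [zero_pow (by grind), zero_mul]]
  simp

theorem coeff_symbolPoly_two_mul (ξ ν : Fin n → ℝ) (lam : ℂ) :
    (symbolPoly n q a ξ ν lam).coeff (2 * q) = principalSymbol n q a (fun i => (ν i : ℂ)) 0 := by
  rw [symbolPoly, finsetSum_coeff,
    Finset.sum_eq_single_of_mem (2 * q) (Finset.self_mem_range_succ _) fun r hr hne => by
      rw [coeff_C_mul, coeff_eq_zero_of_natDegree_lt, mul_zero]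
      exact (natDegree_symbolPolyPart_le r ξ ν).trans_lt (by grind)]
  simp [coeff_symbolPolyPart_self, principalSymbol_zero_right]

theorem continuousCoeffs_symbolPoly :
    ContinuousCoeffs fun x : (Fin n → ℝ) × (Fin n → ℝ) × ℂ => symbolPoly n q a x.1 x.2.1 x.2.2 :=
  .sum _ fun r _ => .mul (.C (by fun_prop)) <| .sum _ fun μ _ => .mul (.const _) <|
    .prod _ fun i _ => .pow (.add (.mul (.C (by fun_prop)) (.const X)) (.C (by fun_prop))) _

theorem symbolPoly_neg (ξ ν : Fin n → ℝ) (lam : ℂ) :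
    symbolPoly n q a ξ (-ν) lam = (symbolPoly n q a ξ ν lam).comp (-X) := by
  refine Polynomial.funext fun τ => ?_
  simp only [eval_comp, eval_neg, eval_X, eval_symbolPoly, Pi.neg_apply, ofReal_neg, neg_mul,
    mul_neg]

end SymbolPoly

theorem sqrt_sum_sq_add_norm_ne_zero_iff {ι : Type*} [Fintype ι] (ξ : ι → ℝ) (lam : ℂ) :
    Real.sqrt (∑ i, ξ i ^ 2) + ‖lam‖ ≠ 0 ↔ ξ ≠ 0 ∨ lam ≠ 0 := by
  rw [Ne, add_eq_zero_iff_of_nonneg (Real.sqrt_nonneg _) (norm_nonneg _),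
    Real.sqrt_eq_zero (Finset.sum_nonneg fun i _ => sq_nonneg _),
    Finset.sum_eq_zero_iff_of_nonneg fun i _ => sq_nonneg _, norm_eq_zero, not_and_or]
  simp [funext_iff]

theorem zero_mem_closedAngle {θ₁ θ₂ : ℝ} {z : ℂ} (hz : z ∈ closedAngle θ₁ θ₂) :
    (0 : ℂ) ∈ closedAngle θ₁ θ₂ :=
  let ⟨_, _, θ, h₁, h₂, _⟩ := hz
  ⟨0, le_rfl, θ, h₁, h₂, by simp⟩

theorem joinedIn_neg_of_sum_sq_eq_one {n : ℕ} (hn : 2 ≤ n) {ν : Fin n → ℝ}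
    (hν : ∑ i, ν i ^ 2 = 1) : JoinedIn {v : Fin n → ℝ | ∑ i, v i ^ 2 = 1} ν (-ν) := by
  have hsphere : ∀ v : Fin n → ℝ,
      WithLp.toLp 2 v ∈ Metric.sphere (0 : EuclideanSpace ℝ (Fin n)) 1 ↔ ∑ i, v i ^ 2 = 1 := by
    simp [EuclideanSpace.norm_eq, Real.sqrt_eq_one]
  have hrank : 1 < Module.rank ℝ (EuclideanSpace ℝ (Fin n)) := by
    rw [← Module.finrank_eq_rank, finrank_euclideanSpace_fin]
    exact_mod_cast hn
  have h := (isPathConnected_sphere hrank 0 zero_le_one).joinedIn _ ((hsphere ν).mpr hν) _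
    ((hsphere (-ν)).mpr (by simpa using hν))
  refine (h.map (PiLp.continuous_ofLp 2 _)).mono ?_
  rintro _ ⟨v, hv, rfl⟩
  exact (hsphere v.ofLp).mp hv

def admissibleTriples (n : ℕ) (θ₁ θ₂ : ℝ) : Set ((Fin n → ℝ) × (Fin n → ℝ) × ℂ) :=
  {x | ∑ i, x.2.1 i ^ 2 = 1 ∧ ∑ i, x.1 i * x.2.1 i = 0 ∧ x.2.2 ∈ closedAngle θ₁ θ₂ ∧
    (x.1 ≠ 0 ∨ x.2.2 ≠ 0)}

theorem exists_joinedIn_admissibleTriples_zero {n : ℕ} {θ₁ θ₂ : ℝ}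
    {x : (Fin n → ℝ) × (Fin n → ℝ) × ℂ} (hx : x ∈ admissibleTriples n θ₁ θ₂) :
    ∃ lam ∈ closedAngle θ₁ θ₂, lam ≠ 0 ∧
      JoinedIn (admissibleTriples n θ₁ θ₂) x (0, x.2.1, lam) := by
  obtain ⟨ξ, ν, _⟩ := x
  obtain ⟨hν, hξν, ⟨r, hr, θ, hθ₁, hθ₂, rfl⟩, hnd⟩ := hx
  have hK : ∀ s : ℝ, 0 ≤ s → (s : ℂ) * exp (θ * I) ∈ closedAngle θ₁ θ₂ :=
    fun s hs => ⟨s, hs, θ, hθ₁, hθ₂, rfl⟩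
  have hne : ∀ s : ℝ, 0 < s → (s : ℂ) * exp (θ * I) ≠ 0 :=
    fun s hs => mul_ne_zero (ofReal_ne_zero.mpr hs.ne') (exp_ne_zero _)
  refine ⟨_, hK (r + 1) (by linarith), hne (r + 1) (by linarith), .trans (y := (ξ, ν, _))
    (.ofLine (f := fun t : ℝ => (ξ, ν, ((r + t : ℝ) : ℂ) * exp (θ * I)))
      (by fun_prop) (by simp) rfl ?_)
    (.ofLine (f := fun t : ℝ => ((1 - t) • ξ, ν, ((r + 1 : ℝ) : ℂ) * exp (θ * I)))
      (by fun_prop) (by simp) (by simp) ?_)⟩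
  · rintro _ ⟨t, ⟨ht₀, -⟩, rfl⟩
    refine ⟨hν, hξν, hK _ (by linarith), hnd.imp_right fun h => hne _ ?_⟩
    have hr₀ : r ≠ 0 := by rintro rfl; simp at h
    exact add_pos_of_pos_of_nonneg (hr.lt_of_ne' hr₀) ht₀
  · rintro _ ⟨t, -, rfl⟩
    refine ⟨hν, ?_, hK _ (by linarith), .inr (hne _ (by linarith))⟩
    simp [mul_assoc, ← Finset.mul_sum, hξν]

/-- Condition (i) of parameter-ellipticity of `principalSymbol n q a` in the angle
`closedAngle θ₁ θ₂`. -/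
def ParameterElliptic (n q : ℕ) (a : ℕ → (Fin n → ℕ) → ℂ) (θ₁ θ₂ : ℝ) : Prop :=
  ∀ ξ : Fin n → ℝ, ∀ lam ∈ closedAngle θ₁ θ₂,
    Real.sqrt (∑ i, ξ i ^ 2) + ‖lam‖ ≠ 0 → principalSymbol n q a (fun i => (ξ i : ℂ)) lam ≠ 0

namespace ParameterElliptic

variable {n q : ℕ} {a : ℕ → (Fin n → ℕ) → ℂ} {θ₁ θ₂ : ℝ}

theorem natDegree_symbolPoly (hell : ParameterElliptic n q a θ₁ θ₂) {ξ ν : Fin n → ℝ} {lam : ℂ}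
    (hν : ∑ i, ν i ^ 2 = 1) (hlam : lam ∈ closedAngle θ₁ θ₂) :
    (symbolPoly n q a ξ ν lam).natDegree = 2 * q := by
  refine (natDegree_symbolPoly_le ξ ν lam).antisymm (le_natDegree_of_ne_zero ?_)
  rw [coeff_symbolPoly_two_mul]
  exact hell ν 0 (zero_mem_closedAngle hlam) (by simp [hν])

theorem eval_symbolPoly_ofReal_ne_zero (hell : ParameterElliptic n q a θ₁ θ₂)
    {ξ ν : Fin n → ℝ} {lam : ℂ} (hx : (ξ, ν, lam) ∈ admissibleTriples n θ₁ θ₂) (t : ℝ) :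
    (symbolPoly n q a ξ ν lam).eval (t : ℂ) ≠ 0 := by
  obtain ⟨hν, hξν, hlam, hnd⟩ := hx
  have hnd' : ξ + t • ν ≠ 0 ∨ lam ≠ 0 := by
    refine hnd.imp_left fun hξ h => hξ ?_
    have hξ' : ξ = -t • ν := by rw [neg_smul, eq_neg_iff_add_eq_zero, h]
    have ht : t = 0 := by
      simpa [hξ', mul_assoc, ← Finset.mul_sum, ← sq, hν] using hξν
    simpa [ht] using hξ'
  rw [eval_symbolPoly]
  convert hell _ _ hlam ((sqrt_sum_sq_add_norm_ne_zero_iff _ _).mpr hnd') using 2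
  simp

theorem halfPlaneRootCounts_eq_of_joinedIn (hell : ParameterElliptic n q a θ₁ θ₂)
    {x y : (Fin n → ℝ) × (Fin n → ℝ) × ℂ} (h : JoinedIn (admissibleTriples n θ₁ θ₂) x y) :
    halfPlaneRootCounts (symbolPoly n q a x.1 x.2.1 x.2.2) =
      halfPlaneRootCounts (symbolPoly n q a y.1 y.2.1 y.2.2) := by
  have hF : ContinuousCoeffs fun x : admissibleTriples n θ₁ θ₂ =>
      symbolPoly n q a x.1.1 x.1.2.1 x.1.2.2 :=
    fun j => (continuousCoeffs_symbolPoly j).comp continuous_subtype_val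
  have hlc : IsLocallyConstant fun x : admissibleTriples n θ₁ θ₂ =>
      halfPlaneRootCounts (symbolPoly n q a x.1.1 x.1.2.1 x.1.2.2) :=
    isLocallyConstant_halfPlaneRootCounts hF (fun x => hell.natDegree_symbolPoly x.2.1 x.2.2.2.1)
      (fun x => hell.eval_symbolPoly_ofReal_ne_zero x.2)
  exact JoinedIn.eq_of_isLocallyConstant_subtype (f := fun x : (Fin n → ℝ) × (Fin n → ℝ) × ℂ =>
    halfPlaneRootCounts (symbolPoly n q a x.1 x.2.1 x.2.2)) hlc h

theorem halfPlaneRootCounts_symbolPoly_zero (hell : ParameterElliptic n q a θ₁ θ₂) (hn : 2 ≤ n)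
    {ν : Fin n → ℝ} {lam : ℂ} (hν : ∑ i, ν i ^ 2 = 1) (hlam : lam ∈ closedAngle θ₁ θ₂)
    (hlam₀ : lam ≠ 0) : halfPlaneRootCounts (symbolPoly n q a 0 ν lam) = (q, q) := by
  have hmem : ∀ v : Fin n → ℝ, ∑ i, v i ^ 2 = 1 →
      ((0 : Fin n → ℝ), v, lam) ∈ admissibleTriples n θ₁ θ₂ :=
    fun v hv => ⟨hv, by simp, hlam, .inr hlam₀⟩
  have hjoin : JoinedIn (admissibleTriples n θ₁ θ₂) (0, ν, lam) (0, -ν, lam) :=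
    ((joinedIn_neg_of_sum_sq_eq_one hn hν).map (f := fun v => ((0 : Fin n → ℝ), v, lam))
      (by fun_prop)).mono (by rintro _ ⟨v, hv, rfl⟩; exact hmem v hv)
  have hswap := hell.halfPlaneRootCounts_eq_of_joinedIn hjoin
  have hsum := halfPlaneRootCounts_fst_add_snd (hell.eval_symbolPoly_ofReal_ne_zero (hmem ν hν))
  dsimp only at hswap
  rw [symbolPoly_neg, halfPlaneRootCounts_comp_neg_X] at hswap
  rw [hell.natDegree_symbolPoly hν hlam] at hsum
  obtain ⟨c, hc⟩ : ∃ c, halfPlaneRootCounts (symbolPoly n q a 0 ν lam) = c := ⟨_, rfl⟩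
  rw [hc] at hswap hsum ⊢
  have hc₁ : c.1 = c.2 := congrArg Prod.fst hswap
  ext <;> dsimp only <;> omega

end ParameterElliptic

theorem statement13_general (n q : ℕ) (hn : 2 ≤ n) (a : ℕ → (Fin n → ℕ) → ℂ)
    (θ₁ θ₂ : ℝ)
    (hell : ∀ ξ : Fin n → ℝ, ∀ lam ∈ closedAngle θ₁ θ₂,
      Real.sqrt (∑ i, ξ i ^ 2) + ‖lam‖ ≠ 0 →
      principalSymbol n q a (fun i => (ξ i : ℂ)) lam ≠ 0) :
    ∀ ξ ν : Fin n → ℝ, (∑ i, ν i ^ 2) = 1 → (∑ i, ξ i * ν i) = 0 →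
      ∀ lam ∈ closedAngle θ₁ θ₂, Real.sqrt (∑ i, ξ i ^ 2) + ‖lam‖ ≠ 0 →
      ∀ P : Polynomial ℂ,
        (∀ τ : ℂ, P.eval τ = principalSymbol n q a (fun i => (ξ i : ℂ) + τ * (ν i : ℂ)) lam) →
        P.degree = (2 * q : ℕ) ∧
        (∀ x : ℝ, P.eval (x : ℂ) ≠ 0) ∧
        Multiset.card (P.roots.filter fun z => 0 < z.im) = q ∧
        Multiset.card (P.roots.filter fun z => z.im < 0) = q := by
  change ParameterElliptic n q a θ₁ θ₂ at hell
  intro ξ ν hν hξν lam hlam hne P hP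
  obtain rfl : P = symbolPoly n q a ξ ν lam :=
    Polynomial.funext fun τ => by rw [hP, eval_symbolPoly]
  have hx : (ξ, ν, lam) ∈ admissibleTriples n θ₁ θ₂ :=
    ⟨hν, hξν, hlam, (sqrt_sum_sq_add_norm_ne_zero_iff ξ lam).mp hne⟩
  have hreal := hell.eval_symbolPoly_ofReal_ne_zero hx
  obtain ⟨lam', hlam'K, hlam'₀, hjoin⟩ := exists_joinedIn_admissibleTriples_zero hx
  have hcounts : halfPlaneRootCounts (symbolPoly n q a ξ ν lam) = (q, q) :=
    (hell.halfPlaneRootCounts_eq_of_joinedIn hjoin).trans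
      (hell.halfPlaneRootCounts_symbolPoly_zero hn hν hlam'K hlam'₀)
  refine ⟨?_, hreal, congrArg Prod.fst hcounts, congrArg Prod.snd hcounts⟩
  rw [degree_eq_iff_natDegree_eq fun h => hreal 0 (by simp [h]), hell.natDegree_symbolPoly hν hlam]

/-- Let `A(ζ,λ)` be as above (`n ≥ 2`, `q ≥ 1`) and assume Condition (i)
of parameter-ellipticity in the closed angle `K`: `A(ξ,λ) ≠ 0` for all `ξ ∈ ℝⁿ`, `λ ∈ K`
with `|ξ| + |λ| ≠ 0`. Then for every `ξ ∈ ℝⁿ`, every unit vector `ν ∈ ℝⁿ` orthogonal to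
`ξ`, and every `λ ∈ K` with `|ξ| + |λ| ≠ 0`, the polynomial `p(τ) := A(ξ + τν, λ)` in
`τ ∈ ℂ` has degree exactly `2q`, has no real roots, and has exactly `q` roots with
`Im τ > 0` and exactly `q` roots with `Im τ < 0` (counted with multiplicity). -/
theorem statement13 (n q : ℕ) (hn : 2 ≤ n) (hq : 1 ≤ q) (a : ℕ → (Fin n → ℕ) → ℂ)
    (θ₁ θ₂ : ℝ) (hθ : θ₁ ≤ θ₂)
    (hell : ∀ ξ : Fin n → ℝ, ∀ lam ∈ closedAngle θ₁ θ₂,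
      Real.sqrt (∑ i, ξ i ^ 2) + ‖lam‖ ≠ 0 →
      principalSymbol n q a (fun i => (ξ i : ℂ)) lam ≠ 0) :
    ∀ ξ ν : Fin n → ℝ, (∑ i, ν i ^ 2) = 1 → (∑ i, ξ i * ν i) = 0 →
      ∀ lam ∈ closedAngle θ₁ θ₂, Real.sqrt (∑ i, ξ i ^ 2) + ‖lam‖ ≠ 0 →
      ∀ P : Polynomial ℂ,
        (∀ τ : ℂ, P.eval τ = principalSymbol n q a (fun i => (ξ i : ℂ) + τ * (ν i : ℂ)) lam) →
        P.degree = (2 * q : ℕ) ∧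
        (∀ x : ℝ, P.eval (x : ℂ) ≠ 0) ∧
        Multiset.card (P.roots.filter fun z => 0 < z.im) = q ∧
        Multiset.card (P.roots.filter fun z => z.im < 0) = q :=
  statement13_general n q hn a θ₁ θ₂ hell
end
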